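/- arXiv:0912.2219 — 5 statements merged into one kernel-verified Lean document; each statement's English description precedes it below -/
import Mathlib

section
/- The face ring Z[S] of a simplicial poset S is a free abelian group with basis the monomials v_{τ₁}^{a₁} v_{τ₂}^{a₂} ⋯ v_{τ_k}^{a_k} where τ₁ < τ₂ < ⋯ < τ_k is a chain of elements of S \ {0̂} and each aᵢ ≥ 1. -/
open MvPolynomial

/-- A finite poset with a bottom element is a *simplicial poset* if every lower
interval `[⊥, σ]` is a Boolean lattice, i.e. order-isomorphic to the poset of
subsets of a finite set. -/
def IsSimplicialPoset (α : Type) [Fintype α] [PartialOrder α] [OrderBot α] : Prop :=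
  ∀ σ : α, ∃ k : ℕ, Nonempty (Set.Icc (⊥ : α) σ ≃o Finset (Fin k))

/-- The vertex set `V(σ)`: rank-one elements (atoms) below `σ`. -/
def vertexSet {α : Type} [PartialOrder α] [OrderBot α] (σ : α) : Set α :=
  {i : α | IsAtom i ∧ i ≤ σ}

/-- The rank `|σ|`, defined as the number of vertices of `σ`. -/
noncomputable def srank {α : Type} [PartialOrder α] [OrderBot α] (σ : α) : ℕ :=
  (vertexSet σ).ncard

/-- `σ ∨ τ`: the set of least (minimal) common upper bounds. -/
def joins {α : Type} [PartialOrder α] (σ τ : α) : Set α :=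
  {η : α | Minimal (fun x => σ ≤ x ∧ τ ≤ x) η}

/-- `σ ∧ τ`: the set of greatest (maximal) common lower bounds. -/
def meets {α : Type} [PartialOrder α] (σ τ : α) : Set α :=
  {ρ : α | Maximal (fun x => x ≤ σ ∧ x ≤ τ) ρ}

/-- The straightening ideal defining the face ring of a simplicial poset:
generated by `v_⊥ - 1`, the products `v_σ v_τ` with `σ ∨ τ = ∅`, and the
elements `v_σ v_τ - v_{σ∧τ} ∑_{η ∈ σ∨τ} v_η`. -/
noncomputable def straightening (R : Type) [CommRing R]
    (α : Type) [Fintype α] [PartialOrder α] [OrderBot α] : Ideal (MvPolynomial α R) :=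
  Ideal.span (({X ⊥ - 1} : Set (MvPolynomial α R)) ∪
    {p | ∃ σ τ : α, joins σ τ = ∅ ∧ p = X σ * X τ} ∪
    {p | ∃ σ τ ρ : α, ρ ∈ meets σ τ ∧ (joins σ τ).Nonempty ∧
      p = X σ * X τ - X ρ * ∑ η ∈ (Set.toFinite (joins σ τ)).toFinset, X η})

/-- The face ring `R[S]` of a simplicial poset. -/
noncomputable abbrev faceRing (R : Type) [CommRing R]
    (α : Type) [Fintype α] [PartialOrder α] [OrderBot α] :=
  MvPolynomial α R ⧸ straightening R α

/-!
Spanning: the relations `v_⊥ = 1`, `v_σ v_τ = 0` (no common upper bound) and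
`v_σ v_τ = v_{σ∧τ} ∑_{η ∈ σ∨τ} v_η` rewrite any monomial containing two incomparable faces.
Each rewriting step strictly lowers the weight `∑ a_σ (N² + 1 - |σ|²)`, because
`|σ∧τ| + |η| = |σ| + |τ|` while `|η|` exceeds both `|σ|` and `|τ|`; so chain monomials span.

Independence (Stanley): for a face `γ`, sending `v_σ` to the product of the vertices of `σ` when
`σ ≤ γ`, and to `0` otherwise, kills the straightening ideal because `[⊥, γ]` is Boolean. A chain
monomial `∏ v_{τᵢ}^{aᵢ}` below `γ` goes to the monomial with exponent `∑ aᵢ 1_{V(τᵢ)}`, which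
determines it (its support is the vertex set of the top face `τ_k`; peel off `v_{τ_k}` and
recurse). Taking `γ` to be the top of a given chain monomial and reading off that coefficient
gives linear functionals dual to the chain monomials.
-/

lemma Finset.exists_isGreatest_of_isChain {β : Type*} [PartialOrder β] {s : Finset β}
    (hs : s.Nonempty) (hc : IsChain (· ≤ ·) (s : Set β)) : ∃ τ, IsGreatest (s : Set β) τ := by
  obtain ⟨τ, hτ⟩ := s.exists_maximal hs
  exact ⟨τ, hτ.1, fun σ hσ ↦ (hc.total hσ hτ.1).elim id fun h ↦ hτ.2 hσ h⟩

lemma Finsupp.exists_eq_single_one_add {ι : Type*} {f : ι →₀ ℕ} {σ : ι} (hσ : σ ∈ f.support) :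
    ∃ g, f = Finsupp.single σ 1 + g :=
  ⟨f - Finsupp.single σ 1, (add_tsub_cancel_of_le (Finsupp.single_le_iff.2
    (Nat.one_le_iff_ne_zero.2 (Finsupp.mem_support_iff.1 hσ)))).symm⟩

lemma Finsupp.exists_eq_single_one_add_single_one_add {ι : Type*} {f : ι →₀ ℕ} {σ τ : ι}
    (hσ : σ ∈ f.support) (hτ : τ ∈ f.support) (hστ : σ ≠ τ) :
    ∃ g, f = Finsupp.single σ 1 + (Finsupp.single τ 1 + g) := by
  obtain ⟨f', rfl⟩ := exists_eq_single_one_add hσ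
  have hτ' : τ ∈ f'.support := by
    simpa [Finsupp.single_apply, hστ] using hτ
  obtain ⟨g, rfl⟩ := exists_eq_single_one_add hτ'
  exact ⟨g, rfl⟩

namespace SimplicialPoset

variable {α : Type} [PartialOrder α]

lemma joins_comm (σ τ : α) : joins σ τ = joins τ σ := by
  simp only [joins, and_comm]

lemma exists_mem_joins_le [Finite α] {σ τ γ : α} (hσ : σ ≤ γ) (hτ : τ ≤ γ) :
    ∃ η ∈ joins σ τ, η ≤ γ := by
  obtain ⟨η, hηγ, hη⟩ :=
    (Set.toFinite {x | σ ≤ x ∧ τ ≤ x}).exists_le_minimal (a := γ) ⟨hσ, hτ⟩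
  exact ⟨η, hη, hηγ⟩

noncomputable def atomEmbedding {γ : α} {k : ℕ} (e : Set.Iic γ ≃o Finset (Fin k)) : Fin k ↪ α :=
  ⟨fun i ↦ e.symm {i}, fun i j h ↦ by simpa using e.symm.injective (Subtype.ext h)⟩

@[simp]
lemma atomEmbedding_apply {γ : α} {k : ℕ} (e : Set.Iic γ ≃o Finset (Fin k)) (i : Fin k) :
    atomEmbedding e i = e.symm {i} :=
  rfl

variable [OrderBot α]

lemma meets_nonempty [Finite α] (σ τ : α) : (meets σ τ).Nonempty := by
  obtain ⟨ρ, -, hρ⟩ :=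
    (Set.toFinite {x | x ≤ σ ∧ x ≤ τ}).exists_le_maximal (a := ⊥) ⟨bot_le, bot_le⟩
  exact ⟨ρ, hρ⟩

section Vertices

variable [Finite α]

noncomputable def vertexFinset (σ : α) : Finset α := (Set.toFinite (vertexSet σ)).toFinset

@[simp]
lemma mem_vertexFinset {σ v : α} : v ∈ vertexFinset σ ↔ IsAtom v ∧ v ≤ σ := by
  simp [vertexFinset, vertexSet]

lemma vertexFinset_mono {σ τ : α} (h : σ ≤ τ) : vertexFinset σ ⊆ vertexFinset τ :=
  fun _ hv ↦ mem_vertexFinset.2 ⟨(mem_vertexFinset.1 hv).1, (mem_vertexFinset.1 hv).2.trans h⟩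

@[simp]
lemma vertexFinset_bot : vertexFinset (⊥ : α) = ∅ :=
  Finset.eq_empty_of_forall_notMem fun _ hv ↦
    (mem_vertexFinset.1 hv).1.1 (le_bot_iff.1 (mem_vertexFinset.1 hv).2)

lemma srank_eq_card (σ : α) : srank σ = (vertexFinset σ).card :=
  Set.ncard_eq_toFinset_card _ _

end Vertices

section BooleanInterval

variable {γ : α} {k : ℕ} (e : Set.Iic γ ≃o Finset (Fin k))

lemma isAtom_coe_iff (x : Set.Iic γ) : IsAtom (x : α) ↔ ∃ i, e x = {i} := by
  rw [← Finset.isAtom_iff, e.isAtom_iff]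
  exact ⟨fun h ↦ h.Iic x.2, IsAtom.of_isAtom_coe_Iic⟩

lemma vertexFinset_eq_map [Finite α] {x : α} (hx : x ≤ γ) :
    vertexFinset x = (e ⟨x, hx⟩).map (atomEmbedding e) := by
  ext v
  simp only [mem_vertexFinset, Finset.mem_map, atomEmbedding_apply]
  constructor
  · rintro ⟨hv, hvx⟩
    obtain ⟨i, hi⟩ := (isAtom_coe_iff e ⟨v, hvx.trans hx⟩).1 hv
    refine ⟨i, ?_, by rw [← hi, e.symm_apply_apply]⟩
    rw [← Finset.singleton_subset_iff, ← hi]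
    exact e.monotone (show (⟨v, _⟩ : Set.Iic γ) ≤ ⟨x, hx⟩ from hvx)
  · rintro ⟨i, hi, rfl⟩
    refine ⟨(isAtom_coe_iff e _).2 ⟨i, e.apply_symm_apply _⟩, ?_⟩
    have h := e.symm.monotone (Finset.singleton_subset_iff.2 hi)
    rw [e.symm_apply_apply] at h
    exact h

end BooleanInterval

lemma exists_orderIso_Iic [Fintype α] (hS : IsSimplicialPoset α) (γ : α) :
    ∃ k, Nonempty (Set.Iic γ ≃o Finset (Fin k)) := by
  obtain ⟨k, ⟨e⟩⟩ := hS γ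
  exact ⟨k, ⟨(OrderIso.setCongr _ _ Set.Icc_bot).symm.trans e⟩⟩

section Simplicial

variable [Fintype α] (hS : IsSimplicialPoset α)
include hS

lemma vertexFinset_subset_vertexFinset_iff {γ x y : α} (hx : x ≤ γ) (hy : y ≤ γ) :
    vertexFinset x ⊆ vertexFinset y ↔ x ≤ y := by
  obtain ⟨k, ⟨e⟩⟩ := exists_orderIso_Iic hS γ
  rw [vertexFinset_eq_map e hx, vertexFinset_eq_map e hy, Finset.map_subset_map]
  exact e.le_iff_le

lemma exists_vertexFinset_eq {γ : α} {s : Finset α} (hs : s ⊆ vertexFinset γ) :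
    ∃ x ≤ γ, vertexFinset x = s := by
  obtain ⟨k, ⟨e⟩⟩ := exists_orderIso_Iic hS γ
  rw [vertexFinset_eq_map e le_rfl, Finset.subset_map_iff] at hs
  obtain ⟨u, -, rfl⟩ := hs
  exact ⟨e.symm u, (e.symm u).2, by simp [vertexFinset_eq_map e (e.symm u).2]⟩

lemma eq_of_vertexFinset_eq {γ x y : α} (hx : x ≤ γ) (hy : y ≤ γ)
    (h : vertexFinset x = vertexFinset y) : x = y :=
  le_antisymm ((vertexFinset_subset_vertexFinset_iff hS hx hy).1 h.le)
    ((vertexFinset_subset_vertexFinset_iff hS hy hx).1 h.ge)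

lemma vertexFinset_ssubset_vertexFinset {x y : α} (h : x < y) :
    vertexFinset x ⊂ vertexFinset y := by
  rw [Finset.ssubset_def, vertexFinset_subset_vertexFinset_iff hS h.le le_rfl,
    vertexFinset_subset_vertexFinset_iff hS le_rfl h.le]
  exact ⟨h.le, h.not_ge⟩

lemma vertexFinset_nonempty {σ : α} (h : σ ≠ ⊥) : (vertexFinset σ).Nonempty := by
  simpa using vertexFinset_ssubset_vertexFinset hS (bot_lt_iff_ne_bot.2 h)

lemma vertexFinset_of_mem_joins [DecidableEq α] {σ τ η : α} (hη : η ∈ joins σ τ) :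
    vertexFinset η = vertexFinset σ ∪ vertexFinset τ := by
  obtain ⟨⟨hσ, hτ⟩, hmin⟩ := hη
  obtain ⟨x, hxη, hx⟩ := exists_vertexFinset_eq hS
    (Finset.union_subset (vertexFinset_mono hσ) (vertexFinset_mono hτ))
  have hσx : σ ≤ x :=
    (vertexFinset_subset_vertexFinset_iff hS hσ hxη).1 (hx ▸ Finset.subset_union_left)
  have hτx : τ ≤ x :=
    (vertexFinset_subset_vertexFinset_iff hS hτ hxη).1 (hx ▸ Finset.subset_union_right)
  rw [← hx, le_antisymm (hmin ⟨hσx, hτx⟩ hxη) hxη]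

lemma eq_of_mem_joins_of_le {σ τ η η' γ : α} (hη : η ∈ joins σ τ) (hη' : η' ∈ joins σ τ)
    (hηγ : η ≤ γ) (hη'γ : η' ≤ γ) : η = η' :=
  eq_of_vertexFinset_eq hS hηγ hη'γ
    (by classical rw [vertexFinset_of_mem_joins hS hη, vertexFinset_of_mem_joins hS hη'])

lemma vertexFinset_of_mem_meets [DecidableEq α] {σ τ ρ η : α} (hη : η ∈ joins σ τ)
    (hρ : ρ ∈ meets σ τ) :
    vertexFinset ρ = vertexFinset σ ∩ vertexFinset τ := by
  obtain ⟨⟨hσ, hτ⟩, -⟩ := hη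
  obtain ⟨⟨hρσ, hρτ⟩, hmax⟩ := hρ
  obtain ⟨m, hmη, hm⟩ := exists_vertexFinset_eq hS
    ((Finset.inter_subset_left (s₂ := vertexFinset τ)).trans (vertexFinset_mono hσ))
  have hmσ : m ≤ σ :=
    (vertexFinset_subset_vertexFinset_iff hS hmη hσ).1 (hm ▸ Finset.inter_subset_left)
  have hmτ : m ≤ τ :=
    (vertexFinset_subset_vertexFinset_iff hS hmη hτ).1 (hm ▸ Finset.inter_subset_right)
  have hρm : ρ ≤ m := (vertexFinset_subset_vertexFinset_iff hS (hρσ.trans hσ) hmη).1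
    (hm ▸ Finset.subset_inter (vertexFinset_mono hρσ) (vertexFinset_mono hρτ))
  rw [← hm, le_antisymm hρm (hmax ⟨hmσ, hmτ⟩ hρm)]

lemma srank_add_srank_of_mem_meets {σ τ ρ η : α} (hη : η ∈ joins σ τ) (hρ : ρ ∈ meets σ τ) :
    srank ρ + srank η = srank σ + srank τ := by
  classical
  simp only [srank_eq_card, vertexFinset_of_mem_meets hS hη hρ, vertexFinset_of_mem_joins hS hη]
  exact Finset.card_inter_add_card_union _ _

lemma srank_lt_of_mem_joins {σ τ η : α} (h : ¬τ ≤ σ) (hη : η ∈ joins σ τ) :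
    srank σ < srank η := by
  rw [srank_eq_card, srank_eq_card]
  exact Finset.card_lt_card <| vertexFinset_ssubset_vertexFinset hS <|
    hη.1.1.lt_of_ne (by rintro rfl; exact h hη.1.2)

end Simplicial

end SimplicialPoset

namespace FaceRing

open SimplicialPoset

variable {α : Type} [PartialOrder α] [OrderBot α]

abbrev ChainExponent (α : Type) [PartialOrder α] [OrderBot α] :=
  {f : α →₀ ℕ // (⊥ : α) ∉ f.support ∧ IsChain (· ≤ ·) (f.support : Set α)}

def chainExponentsBelow (γ : α) : Set (α →₀ ℕ) :=
  {f | ⊥ ∉ f.support ∧ IsChain (· ≤ ·) (f.support : Set α) ∧ ∀ σ ∈ f.support, σ ≤ γ}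

lemma mem_chainExponentsBelow_of_support_subset {γ : α} {f g : α →₀ ℕ}
    (hf : f ∈ chainExponentsBelow γ) (h : g.support ⊆ f.support) : g ∈ chainExponentsBelow γ :=
  ⟨fun hb ↦ hf.1 (h hb), hf.2.1.mono (by exact_mod_cast h), fun σ hσ ↦ hf.2.2 σ (h hσ)⟩

variable [Fintype α] (R : Type) [CommRing R]

noncomputable def chainMonomial (f : ChainExponent α) : faceRing R α :=
  Ideal.Quotient.mk _ (monomial f.1 1)

section Spanning

lemma mk_X_bot : Ideal.Quotient.mk (straightening R α) (X ⊥) = 1 := by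
  rw [← map_one (Ideal.Quotient.mk (straightening R α)), Ideal.Quotient.eq]
  exact Ideal.subset_span (Or.inl (Or.inl rfl))

lemma mk_X_mul_X_of_joins_eq_empty {σ τ : α} (h : joins σ τ = ∅) :
    Ideal.Quotient.mk (straightening R α) (X σ * X τ) = 0 :=
  Ideal.Quotient.eq_zero_iff_mem.2 (Ideal.subset_span (Or.inl (Or.inr ⟨σ, τ, h, rfl⟩)))

lemma mk_X_mul_X_of_mem_meets {σ τ ρ : α} (hρ : ρ ∈ meets σ τ) (h : (joins σ τ).Nonempty) :
    Ideal.Quotient.mk (straightening R α) (X σ * X τ) =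
      Ideal.Quotient.mk _ (X ρ * ∑ η ∈ (Set.toFinite (joins σ τ)).toFinset, X η) :=
  Ideal.Quotient.eq.2 (Ideal.subset_span (Or.inr ⟨σ, τ, ρ, hρ, h, rfl⟩))

noncomputable def straighteningWeight (σ : α) : ℕ := Fintype.card α ^ 2 + 1 - srank σ ^ 2

lemma srank_sq_le (σ : α) : srank σ ^ 2 ≤ Fintype.card α ^ 2 :=
  Nat.pow_le_pow_left ((srank_eq_card σ).trans_le (Finset.card_le_univ _)) 2

lemma straighteningWeight_pos (σ : α) : 0 < straighteningWeight σ := by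
  have := srank_sq_le σ
  unfold straighteningWeight
  omega

lemma straighteningWeight_add_lt (hS : IsSimplicialPoset α) {σ τ ρ η : α} (hστ : ¬σ ≤ τ)
    (hτσ : ¬τ ≤ σ) (hη : η ∈ joins σ τ) (hρ : ρ ∈ meets σ τ) :
    straighteningWeight ρ + straighteningWeight η <
      straighteningWeight σ + straighteningWeight τ := by
  have hsum := srank_add_srank_of_mem_meets hS hη hρ
  have hσ := srank_lt_of_mem_joins hS hτσ hη
  have hτ := srank_lt_of_mem_joins hS hστ (joins_comm σ τ ▸ hη)
  -- with equal sums, `ρ² + η² - σ² - τ² = 2 (η - σ) (η - τ)` for the ranks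
  have hsq : srank σ ^ 2 + srank τ ^ 2 < srank ρ ^ 2 + srank η ^ 2 := by
    zify at hsum hσ hτ ⊢
    nlinarith [mul_pos (sub_pos.2 hσ) (sub_pos.2 hτ)]
  have := srank_sq_le σ; have := srank_sq_le τ; have := srank_sq_le ρ; have := srank_sq_le η
  unfold straighteningWeight
  omega

lemma mk_monomial_mem_span (hS : IsSimplicialPoset α) (f : α →₀ ℕ) :
    Ideal.Quotient.mk (straightening R α) (monomial f 1) ∈
      Submodule.span R (Set.range (chainMonomial R)) := by
  induction hn : Finsupp.weight straighteningWeight f using Nat.strong_induction_on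
    generalizing f with
  | _ n ih =>
  subst hn
  by_cases hbot : ⊥ ∈ f.support
  · obtain ⟨g, rfl⟩ := Finsupp.exists_eq_single_one_add hbot
    rw [monomial_single_add, pow_one, map_mul, mk_X_bot, one_mul]
    refine ih _ ?_ g rfl
    have := straighteningWeight_pos (⊥ : α)
    simp only [map_add, Finsupp.weight_single, smul_eq_mul, one_mul]
    omega
  by_cases hchain : IsChain (· ≤ ·) (f.support : Set α)
  · exact Submodule.subset_span ⟨⟨f, hbot, hchain⟩, rfl⟩
  simp only [IsChain, Set.Pairwise, Finset.mem_coe, not_forall, not_or] at hchain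
  obtain ⟨σ, hσ, τ, hτ, -, hστ, hτσ⟩ := hchain
  obtain ⟨g, rfl⟩ := Finsupp.exists_eq_single_one_add_single_one_add hσ hτ (ne_of_not_le hστ)
  rw [monomial_single_add, monomial_single_add, pow_one, pow_one, ← mul_assoc, map_mul]
  rcases (joins σ τ).eq_empty_or_nonempty with hj | hj
  · rw [mk_X_mul_X_of_joins_eq_empty R hj, zero_mul]
    exact zero_mem _
  obtain ⟨ρ, hρ⟩ := meets_nonempty σ τ
  rw [mk_X_mul_X_of_mem_meets R hρ hj, ← map_mul, mul_assoc, Finset.sum_mul, Finset.mul_sum,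
    map_sum]
  refine Submodule.sum_mem _ fun η hη ↦ ?_
  rw [Set.Finite.mem_toFinset] at hη
  rw [← pow_one (X η), ← pow_one (X ρ), ← monomial_single_add, ← monomial_single_add]
  refine ih _ ?_ _ rfl
  have := straighteningWeight_add_lt hS hστ hτσ hη hρ
  simp only [map_add, Finsupp.weight_single, smul_eq_mul, one_mul]
  omega

lemma span_chainMonomial_eq_top (hS : IsSimplicialPoset α) :
    Submodule.span R (Set.range (chainMonomial (α := α) R)) = ⊤ := by
  rw [eq_top_iff]
  rintro x -
  obtain ⟨p, rfl⟩ := Ideal.Quotient.mk_surjective x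
  induction p using MvPolynomial.induction_on' with
  | monomial f a =>
    rw [← mul_one a, ← smul_eq_mul, ← smul_monomial, ← Ideal.Quotient.mkₐ_eq_mk R, map_smul]
    exact Submodule.smul_mem _ _ (mk_monomial_mem_span R hS f)
  | add p q hp hq => rw [map_add]; exact add_mem hp hq

end Spanning

section Independence

noncomputable def vertexExponent (σ : α) : α →₀ ℕ := ∑ v ∈ vertexFinset σ, Finsupp.single v 1

lemma vertexExponent_apply [DecidableEq α] (σ v : α) :
    vertexExponent σ v = if v ∈ vertexFinset σ then 1 else 0 := by
  simp [vertexExponent, Finsupp.finsetSum_apply, Finsupp.single_apply]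

@[simp]
lemma vertexExponent_bot : vertexExponent (⊥ : α) = 0 := by
  simp [vertexExponent]

lemma vertexExponent_add_vertexExponent (hS : IsSimplicialPoset α) {σ τ ρ η : α}
    (hη : η ∈ joins σ τ) (hρ : ρ ∈ meets σ τ) :
    vertexExponent σ + vertexExponent τ = vertexExponent ρ + vertexExponent η := by
  classical
  rw [vertexExponent, vertexExponent, vertexExponent, vertexExponent,
    vertexFinset_of_mem_meets hS hη hρ, vertexFinset_of_mem_joins hS hη,
    ← Finset.sum_union_inter, add_comm]

noncomputable def vertexDegree : (α →₀ ℕ) →+ (α →₀ ℕ) := Finsupp.weight vertexExponent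

lemma mem_support_vertexDegree {f : α →₀ ℕ} {v : α} :
    v ∈ (vertexDegree f).support ↔ ∃ σ ∈ f.support, v ∈ vertexFinset σ := by
  classical
  simp [vertexDegree, Finsupp.weight_apply, Finsupp.sum, Finset.sum_eq_zero_iff,
    vertexExponent_apply]
  exact exists_congr fun σ ↦ by tauto

lemma support_vertexDegree_of_isGreatest {f : α →₀ ℕ} {τ : α}
    (hτ : IsGreatest (f.support : Set α) τ) : (vertexDegree f).support = vertexFinset τ := by
  ext v
  rw [mem_support_vertexDegree]
  exact ⟨fun ⟨σ, hσ, hv⟩ ↦ vertexFinset_mono (hτ.2 hσ) hv, fun hv ↦ ⟨τ, hτ.1, hv⟩⟩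

lemma vertexDegree_eq_zero_iff (hS : IsSimplicialPoset α) {f : α →₀ ℕ} (hf : ⊥ ∉ f.support) :
    vertexDegree f = 0 ↔ f = 0 := by
  refine ⟨fun h ↦ ?_, by rintro rfl; exact map_zero _⟩
  by_contra hne
  obtain ⟨σ, hσ⟩ := Finsupp.support_nonempty_iff.2 hne
  obtain ⟨v, hv⟩ := vertexFinset_nonempty hS fun h ↦ hf (h ▸ hσ)
  have := mem_support_vertexDegree.2 ⟨σ, hσ, hv⟩
  rw [h] at this
  simp at this

lemma vertexDegree_injOn (hS : IsSimplicialPoset α) (γ : α) :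
    Set.InjOn vertexDegree (chainExponentsBelow γ) := by
  intro f hf g hg hfg
  induction hn : f.degree using Nat.strong_induction_on generalizing f g with
  | _ n ih =>
  subst hn
  rcases eq_or_ne f 0 with rfl | hf0
  · exact ((vertexDegree_eq_zero_iff hS hg.1).1 (hfg.symm.trans (map_zero _))).symm
  rcases eq_or_ne g 0 with rfl | hg0
  · exact (vertexDegree_eq_zero_iff hS hf.1).1 (hfg.trans (map_zero _))
  obtain ⟨τ, hτ⟩ :=
    Finset.exists_isGreatest_of_isChain (Finsupp.support_nonempty_iff.2 hf0) hf.2.1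
  obtain ⟨τ', hτ'⟩ :=
    Finset.exists_isGreatest_of_isChain (Finsupp.support_nonempty_iff.2 hg0) hg.2.1
  -- both chains have the same top element, since its vertices form the support of the image
  obtain rfl : τ = τ' := eq_of_vertexFinset_eq hS (hf.2.2 _ hτ.1) (hg.2.2 _ hτ'.1) <| by
    rw [← support_vertexDegree_of_isGreatest hτ, ← support_vertexDegree_of_isGreatest hτ', hfg]
  obtain ⟨f', rfl⟩ := Finsupp.exists_eq_single_one_add hτ.1
  obtain ⟨g', rfl⟩ := Finsupp.exists_eq_single_one_add hτ'.1
  have hsub (h : α →₀ ℕ) : h.support ⊆ (Finsupp.single τ 1 + h).support :=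
    Finsupp.support_mono le_add_self
  rw [ih _ (by simp) (mem_chainExponentsBelow_of_support_subset hf (hsub f'))
    (mem_chainExponentsBelow_of_support_subset hg (hsub g'))
    (add_left_cancel (by simpa only [map_add] using hfg)) rfl]

end Independence

section Restriction

open scoped Classical

noncomputable def restrictToFacePoly (γ : α) : MvPolynomial α R →ₐ[R] MvPolynomial α R :=
  aeval fun σ ↦ if σ ≤ γ then monomial (vertexExponent σ) 1 else 0

lemma restrictToFacePoly_X (γ σ : α) :
    restrictToFacePoly R γ (X σ) = if σ ≤ γ then monomial (vertexExponent σ) 1 else 0 :=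
  aeval_X _ _

lemma restrictToFacePoly_monomial (γ : α) (f : α →₀ ℕ) :
    restrictToFacePoly R γ (monomial f 1) =
      if ∀ σ ∈ f.support, σ ≤ γ then monomial (vertexDegree f) 1 else 0 := by
  rw [restrictToFacePoly, aeval_monomial, map_one, one_mul]
  split_ifs with h
  · rw [vertexDegree, Finsupp.weight_apply, monomial_finsupp_sum_index, C_1, one_mul]
    refine Finsupp.prod_congr fun σ hσ ↦ ?_
    rw [if_pos (h σ hσ), monomial_pow, one_pow]
  · obtain ⟨σ, hσ, hσγ⟩ := not_forall₂.1 h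
    refine Finset.prod_eq_zero hσ ?_
    dsimp only
    rw [if_neg hσγ, zero_pow (Finsupp.mem_support_iff.1 hσ)]

lemma restrictToFacePoly_sum_joins (hS : IsSimplicialPoset α) {σ τ γ η₀ : α}
    (hη₀ : η₀ ∈ joins σ τ) (hη₀γ : η₀ ≤ γ) :
    restrictToFacePoly R γ (∑ η ∈ (Set.toFinite (joins σ τ)).toFinset, X η) =
      monomial (vertexExponent η₀) 1 := by
  rw [map_sum, Finset.sum_eq_single_of_mem η₀ (by simpa using hη₀), restrictToFacePoly_X,
    if_pos hη₀γ]
  intro η hη hne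
  rw [restrictToFacePoly_X, if_neg fun hηγ ↦
    hne (eq_of_mem_joins_of_le hS (by simpa using hη) hη₀ hηγ hη₀γ)]

lemma restrictToFacePoly_sum_joins_of_not_le {σ τ γ : α} (h : ¬(σ ≤ γ ∧ τ ≤ γ)) :
    restrictToFacePoly R γ (∑ η ∈ (Set.toFinite (joins σ τ)).toFinset, X η) = 0 := by
  rw [map_sum]
  refine Finset.sum_eq_zero fun η hη ↦ ?_
  rw [Set.Finite.mem_toFinset] at hη
  rw [restrictToFacePoly_X, if_neg fun hηγ ↦ h ⟨hη.1.1.trans hηγ, hη.1.2.trans hηγ⟩]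

lemma straightening_le_ker_restrictToFacePoly (hS : IsSimplicialPoset α) (γ : α) :
    straightening R α ≤ RingHom.ker (restrictToFacePoly R γ) := by
  rw [straightening, Ideal.span_le]
  rintro p ((rfl | ⟨σ, τ, hj, rfl⟩) | ⟨σ, τ, ρ, hρ, hj, rfl⟩)
  all_goals rw [SetLike.mem_coe, RingHom.mem_ker]
  · simp [restrictToFacePoly_X]
  · rw [map_mul, restrictToFacePoly_X, restrictToFacePoly_X]
    split_ifs with hσ hτ
    · obtain ⟨η, hη, -⟩ := exists_mem_joins_le hσ hτ
      exact absurd hj (Set.nonempty_iff_ne_empty.1 ⟨η, hη⟩)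
    all_goals simp only [mul_zero, zero_mul]
  · rw [map_sub, map_mul, map_mul, restrictToFacePoly_X, restrictToFacePoly_X, sub_eq_zero]
    by_cases h : σ ≤ γ ∧ τ ≤ γ
    · obtain ⟨η, hη, hηγ⟩ := exists_mem_joins_le h.1 h.2
      rw [if_pos h.1, if_pos h.2, restrictToFacePoly_X, if_pos (hρ.1.1.trans h.1),
        restrictToFacePoly_sum_joins R hS hη hηγ, monomial_mul, monomial_mul,
        vertexExponent_add_vertexExponent hS hη hρ]
    · rw [restrictToFacePoly_sum_joins_of_not_le R h, mul_zero]
      rcases not_and_or.1 h with hσ | hτ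
      · rw [if_neg hσ, zero_mul]
      · rw [if_neg hτ, mul_zero]

noncomputable def restrictToFace (hS : IsSimplicialPoset α) (γ : α) :
    faceRing R α →ₐ[R] MvPolynomial α R :=
  Ideal.Quotient.liftₐ _ (restrictToFacePoly R γ) fun _ ha ↦
    straightening_le_ker_restrictToFacePoly R hS γ ha

lemma restrictToFace_chainMonomial (hS : IsSimplicialPoset α) (γ : α) (f : ChainExponent α) :
    restrictToFace R hS γ (chainMonomial R f) =
      if ∀ σ ∈ f.1.support, σ ≤ γ then monomial (vertexDegree f.1) 1 else 0 :=
  restrictToFacePoly_monomial R γ f.1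

lemma linearIndependent_chainMonomial (hS : IsSimplicialPoset α) :
    LinearIndependent R (chainMonomial (α := α) R) := by
  have hbound (f : ChainExponent α) : ∃ γ, ∀ σ ∈ f.1.support, σ ≤ γ := by
    rcases f.1.support.eq_empty_or_nonempty with h | h
    · exact ⟨⊥, by simp [h]⟩
    · obtain ⟨τ, hτ⟩ := Finset.exists_isGreatest_of_isChain h f.2.2
      exact ⟨τ, fun σ hσ ↦ hτ.2 hσ⟩
  choose γ hγ using hbound
  refine LinearIndependent.of_pairwise_dual_eq_zero_one _
    (fun f ↦ (lcoeff R (vertexDegree f.1)).comp (restrictToFace R hS (γ f)).toLinearMap)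
    (fun f g hfg ↦ ?_) (fun f ↦ ?_)
  · simp only [LinearMap.comp_apply, AlgHom.toLinearMap_apply, restrictToFace_chainMonomial,
      lcoeff_apply]
    split_ifs with hg
    · rw [coeff_monomial, if_neg fun h ↦ hfg (Subtype.ext (vertexDegree_injOn hS (γ f)
        ⟨f.2.1, f.2.2, hγ f⟩ ⟨g.2.1, g.2.2, hg⟩ h.symm))]
    · exact coeff_zero _
  · simp only [LinearMap.comp_apply, AlgHom.toLinearMap_apply, restrictToFace_chainMonomial,
      lcoeff_apply, if_pos (hγ f), coeff_monomial, if_true]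

end Restriction

noncomputable def chainMonomialBasis (hS : IsSimplicialPoset α) :
    Module.Basis (ChainExponent α) R (faceRing R α) :=
  .mk (linearIndependent_chainMonomial R hS) (span_chainMonomial_eq_top R hS).ge

lemma chainMonomialBasis_apply (hS : IsSimplicialPoset α) (f : ChainExponent α) :
    chainMonomialBasis R hS f = chainMonomial R f :=
  Module.Basis.mk_apply _ _ _

end FaceRing

/-- the face ring `ℤ[S]` is a free abelian group with basis the
monomials `v_{τ₁}^{a₁} ⋯ v_{τ_k}^{a_k}` over chains `τ₁ < ⋯ < τ_k` in `S \ {⊥}`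
with all exponents positive (encoded by finitely supported exponent functions
whose support is a chain avoiding `⊥`). -/
theorem faceRing_basis_chain_monomials {α : Type} [Fintype α] [PartialOrder α] [OrderBot α]
    (hS : IsSimplicialPoset α) :
    ∃ b : Module.Basis {f : α →₀ ℕ // (⊥ : α) ∉ f.support ∧ IsChain (· ≤ ·) (f.support : Set α)}
        ℤ (faceRing ℤ α),
      ∀ f, b f = Ideal.Quotient.mk (straightening ℤ α)
          (f.1.prod fun σ n => X σ ^ n) := by
  refine ⟨FaceRing.chainMonomialBasis ℤ hS, fun f ↦ ?_⟩
  rw [FaceRing.chainMonomialBasis_apply, FaceRing.chainMonomial, monomial_eq, C_1, one_mul]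
end

section
/- The folding map S → K_S, σ ↦ V(σ), induces an injective ring homomorphism Z[K_S] → Z[S] whose image is the subring of Z[S] generated by the degree-two elements v_i corresponding to the vertices. -/
open MvPolynomial

/-- The associated simplicial complex `K_S`: its faces are the vertex sets `V(σ)`,
ordered by inclusion. -/
def AssocComplex (α : Type) [PartialOrder α] [OrderBot α] : Type :=
  {s : Set α // ∃ σ : α, s = vertexSet σ}

instance {α : Type} [PartialOrder α] [OrderBot α] : PartialOrder (AssocComplex α) :=
  Subtype.partialOrder _

instance {α : Type} [PartialOrder α] [OrderBot α] : OrderBot (AssocComplex α) where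
  bot := ⟨vertexSet (⊥ : α), ⟨⊥, rfl⟩⟩
  bot_le s := by
    intro i hi
    exact absurd (le_bot_iff.mp hi.2) hi.1.1

noncomputable instance {α : Type} [Fintype α] [PartialOrder α] [OrderBot α] :
    Fintype (AssocComplex α) := by
  have : Finite (AssocComplex α) := by unfold AssocComplex; infer_instance
  exact Fintype.ofFinite _

/-!
The homomorphism is `w_F ↦ ∏_{i ∈ F} v_i`. It respects the straightening relations of `K_S`
because in `ℤ[S]` a product of distinct vertices satisfies `∏_{i ∈ F} v_i = ∑_{V(σ) = F} v_σ`
(induct on `F`, using `v_τ v_j = ∑_{η ∈ τ ∨ j} v_η` when the meet is `⊥`), which vanishes when `F`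
is not a face; the same identity gives the formula for the generators and the image.

For injectivity, compose with the restrictions `ℤ[S] → ℤ[x_i : i ∈ V(σ)]`, `v_τ ↦ x^{V(τ)}` for
`τ ≤ σ` and `0` otherwise, which are well defined because `[⊥, σ]` is Boolean. On the image of
`ℤ[K_S]` they merely discard the monomials not supported in `V(σ)`. So an element of `ℤ[K_S]`
killed by all of them has, written in the vertex variables `w_{i}`, no monomial supported on a
face, and every other monomial vanishes in the Stanley–Reisner ring `ℤ[K_S]`.
-/

local notation "π" => Ideal.Quotient.mk (straightening _ _)

lemma Finset.sum_sum_eq_sum_of_existsUnique {ι κ M : Type*} [AddCommMonoid M] {A : Finset ι}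
    {J : ι → Finset κ} {B : Finset κ} (hJ : ∀ a ∈ A, J a ⊆ B)
    (hB : ∀ b ∈ B, ∃! a, a ∈ A ∧ b ∈ J a) (f : κ → M) :
    ∑ a ∈ A, ∑ b ∈ J a, f b = ∑ b ∈ B, f b := by
  classical
  have hdisj : (A : Set ι).PairwiseDisjoint J := fun a₁ ha₁ a₂ ha₂ hne =>
    Finset.disjoint_left.mpr fun b hb₁ hb₂ =>
      hne ((hB b (hJ a₁ ha₁ hb₁)).unique ⟨ha₁, hb₁⟩ ⟨ha₂, hb₂⟩)
  have hunion : A.biUnion J = B := (Finset.biUnion_subset.mpr hJ).antisymm fun b hb => by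
    obtain ⟨a, ⟨ha, hba⟩, -⟩ := hB b hb
    exact Finset.mem_biUnion.mpr ⟨a, ha, hba⟩
  rw [← Finset.sum_biUnion hdisj, hunion]

lemma prod_toFinset_inter_mul_prod_toFinset_union {β M : Type*} [Finite β] [CommMonoid M]
    (f : β → M) (s t : Set β) :
    (∏ i ∈ (Set.toFinite (s ∩ t)).toFinset, f i) * ∏ i ∈ (Set.toFinite (s ∪ t)).toFinset, f i =
      (∏ i ∈ (Set.toFinite s).toFinset, f i) * ∏ i ∈ (Set.toFinite t).toFinset, f i := by
  classical
  rw [Set.Finite.toFinset_inter (Set.toFinite s) (Set.toFinite t),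
    Set.Finite.toFinset_union (Set.toFinite s) (Set.toFinite t), mul_comm,
    Finset.prod_union_inter]

section RestrictVars

variable {R : Type} [CommSemiring R] {ι : Type*}

open Classical in
noncomputable def restrictVars (s : Set ι) : MvPolynomial ι R →+* MvPolynomial ι R :=
  eval₂Hom C fun i => if i ∈ s then X i else 0

open Classical in
lemma restrictVars_X (s : Set ι) (i : ι) :
    restrictVars s (X i : MvPolynomial ι R) = if i ∈ s then X i else 0 :=
  eval₂Hom_X' _ _ _

open Classical in
lemma restrictVars_monomial (s : Set ι) (m : ι →₀ ℕ) (c : R) :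
    restrictVars s (monomial m c) = if ↑m.support ⊆ s then monomial m c else 0 := by
  rw [restrictVars, eval₂Hom_monomial, Finsupp.prod]
  split_ifs with h
  · rw [monomial_eq, Finsupp.prod]
    exact congrArg _ (Finset.prod_congr rfl fun i hi => by rw [if_pos (h hi)])
  · obtain ⟨i, hi, his⟩ := Set.not_subset.mp h
    rw [Finset.prod_eq_zero hi (by rw [if_neg his, zero_pow (Finsupp.mem_support_iff.mp hi)]),
      mul_zero]

open Classical in
lemma coeff_restrictVars (s : Set ι) (m : ι →₀ ℕ) (p : MvPolynomial ι R) :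
    coeff m (restrictVars s p) = if ↑m.support ⊆ s then coeff m p else 0 := by
  induction p using MvPolynomial.induction_on' with
  | monomial n c =>
    rw [restrictVars_monomial, coeff_monomial]
    by_cases hnm : n = m
    · subst hnm
      by_cases h : ↑n.support ⊆ s <;> simp [h]
    · split_ifs <;> simp [coeff_monomial, hnm]
  | add p q hp hq =>
    rw [map_add, coeff_add, hp, hq, coeff_add]
    split_ifs <;> simp

end RestrictVars

section VertexSet

variable {α : Type} [PartialOrder α] [OrderBot α]

lemma vertexSet_bot : vertexSet (⊥ : α) = ∅ :=
  Set.eq_empty_of_forall_notMem fun _ hi => hi.1.1 (le_bot_iff.mp hi.2)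

lemma vertexSet_mono : Monotone (vertexSet : α → Set α) :=
  fun _ _ h _ hi => ⟨hi.1, hi.2.trans h⟩

lemma IsAtom.vertexSet_eq {i : α} (hi : IsAtom i) : vertexSet i = {i} := by
  ext j
  refine ⟨fun hj => ?_, fun hj => ⟨hj ▸ hi, hj ▸ le_rfl⟩⟩
  exact hj.2.lt_or_eq.resolve_left fun hlt => hj.1.1 (hi.2 j hlt)

lemma bot_mem_meets {σ τ : α} (h : ∀ ρ, ρ ≤ σ → ρ ≤ τ → ρ = ⊥) : ⊥ ∈ meets σ τ :=
  ⟨⟨bot_le, bot_le⟩, fun ρ hρ _ => (h ρ hρ.1 hρ.2).le⟩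

lemma vertexSet_coe_eq_image {σ : α} {k : ℕ} (e : Set.Iic σ ≃o Finset (Fin k)) (x : Set.Iic σ) :
    vertexSet (x : α) = (fun a => (e.symm {a} : α)) '' (e x : Set (Fin k)) := by
  ext i
  constructor
  · rintro ⟨hi, hix⟩
    have hiσ : i ≤ σ := hix.trans x.2
    obtain ⟨a, ha⟩ := Finset.isAtom_iff.mp ((e.isAtom_iff _).mpr (hi.Iic hiσ))
    refine ⟨a, ?_, ?_⟩
    · rw [Finset.mem_coe, ← Finset.singleton_subset_iff, ← ha]
      exact e.monotone (show (⟨i, hiσ⟩ : Set.Iic σ) ≤ x from hix)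
    · simp [← ha]
  · rintro ⟨a, ha, rfl⟩
    refine ⟨IsAtom.of_isAtom_coe_Iic ((e.symm.isAtom_iff _).mpr (Finset.isAtom_singleton a)), ?_⟩
    exact Subtype.coe_le_coe.mpr (e.symm_apply_le.mpr (Finset.singleton_subset_iff.mpr ha))

end VertexSet

section SimplicialPoset

variable {α : Type} [Fintype α] [PartialOrder α] [OrderBot α]

lemma IsSimplicialPoset.exists_orderIso_Iic (hS : IsSimplicialPoset α) (σ : α) :
    ∃ k : ℕ, Nonempty (Set.Iic σ ≃o Finset (Fin k)) := by
  obtain ⟨k, ⟨e⟩⟩ := hS σ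
  exact ⟨k, ⟨(OrderIso.setCongr _ _ (by ext; simp)).trans e⟩⟩

lemma le_of_vertexSet_subset (hS : IsSimplicialPoset α) {σ τ₁ τ₂ : α} (h₁ : τ₁ ≤ σ)
    (h₂ : τ₂ ≤ σ) (h : vertexSet τ₁ ⊆ vertexSet τ₂) : τ₁ ≤ τ₂ := by
  obtain ⟨k, ⟨e⟩⟩ := hS.exists_orderIso_Iic σ
  have hinj : Function.Injective fun a : Fin k => (e.symm {a} : α) :=
    fun a b hab => Finset.singleton_injective (e.symm.injective (Subtype.ext hab))
  have := vertexSet_coe_eq_image e ⟨τ₁, h₁⟩ ▸ vertexSet_coe_eq_image e ⟨τ₂, h₂⟩ ▸ h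
  exact Subtype.coe_le_coe.mpr (e.le_iff_le.mp (Finset.coe_subset.mp
    ((Set.image_subset_image_iff hinj).mp this)))

lemma eq_of_vertexSet_eq (hS : IsSimplicialPoset α) {σ τ₁ τ₂ : α} (h₁ : τ₁ ≤ σ) (h₂ : τ₂ ≤ σ)
    (h : vertexSet τ₁ = vertexSet τ₂) : τ₁ = τ₂ :=
  (le_of_vertexSet_subset hS h₁ h₂ h.le).antisymm (le_of_vertexSet_subset hS h₂ h₁ h.ge)

lemma exists_le_vertexSet_eq (hS : IsSimplicialPoset α) {σ : α} {F : Set α}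
    (hF : F ⊆ vertexSet σ) : ∃ τ ≤ σ, vertexSet τ = F := by
  obtain ⟨k, ⟨e⟩⟩ := hS.exists_orderIso_Iic σ
  rw [show σ = ((⊤ : Set.Iic σ) : α) from rfl, vertexSet_coe_eq_image e] at hF
  obtain ⟨u, -, rfl⟩ := Set.subset_image_iff.mp hF
  refine ⟨e.symm (Set.toFinite u).toFinset, (e.symm _).2, ?_⟩
  rw [vertexSet_coe_eq_image e, e.apply_symm_apply, Set.Finite.coe_toFinset]

lemma eq_bot_of_vertexSet_eq_empty (hS : IsSimplicialPoset α) {τ : α}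
    (h : vertexSet τ = ∅) : τ = ⊥ :=
  eq_of_vertexSet_eq hS le_rfl bot_le (h.trans vertexSet_bot.symm)

lemma mem_joins_iff (hS : IsSimplicialPoset α) {σ τ η : α} :
    η ∈ joins σ τ ↔ σ ≤ η ∧ τ ≤ η ∧ vertexSet η = vertexSet σ ∪ vertexSet τ := by
  constructor
  · rintro ⟨⟨hση, hτη⟩, hmin⟩
    obtain ⟨ρ, hρη, hρ⟩ := exists_le_vertexSet_eq hS
      (Set.union_subset (vertexSet_mono hση) (vertexSet_mono hτη))
    have hσρ : σ ≤ ρ := le_of_vertexSet_subset hS hση hρη (hρ ▸ Set.subset_union_left)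
    have hτρ : τ ≤ ρ := le_of_vertexSet_subset hS hτη hρη (hρ ▸ Set.subset_union_right)
    exact ⟨hση, hτη, le_antisymm hρη (hmin ⟨hσρ, hτρ⟩ hρη) ▸ hρ⟩
  · rintro ⟨hση, hτη, hη⟩
    refine ⟨⟨hση, hτη⟩, fun ρ hρ hρη => le_of_vertexSet_subset hS le_rfl hρη ?_⟩
    exact hη ▸ Set.union_subset (vertexSet_mono hρ.1) (vertexSet_mono hρ.2)

lemma exists_mem_joins_le (hS : IsSimplicialPoset α) {σ τ υ : α} (hσ : σ ≤ υ) (hτ : τ ≤ υ) :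
    ∃ η ∈ joins σ τ, η ≤ υ := by
  obtain ⟨η, hηυ, hη⟩ := exists_le_vertexSet_eq hS
    (Set.union_subset (vertexSet_mono hσ) (vertexSet_mono hτ))
  refine ⟨η, (mem_joins_iff hS).mpr ⟨?_, ?_, hη⟩, hηυ⟩
  · exact le_of_vertexSet_subset hS hσ hηυ (hη ▸ Set.subset_union_left)
  · exact le_of_vertexSet_subset hS hτ hηυ (hη ▸ Set.subset_union_right)

lemma vertexSet_eq_inter_of_mem_meets (hS : IsSimplicialPoset α) {σ τ ρ υ : α}
    (hρ : ρ ∈ meets σ τ) (hσ : σ ≤ υ) (hτ : τ ≤ υ) :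
    vertexSet ρ = vertexSet σ ∩ vertexSet τ := by
  obtain ⟨μ, hμυ, hμ⟩ := exists_le_vertexSet_eq hS
    ((Set.inter_subset_left (t := vertexSet τ)).trans (vertexSet_mono hσ))
  have hμσ : μ ≤ σ := le_of_vertexSet_subset hS hμυ hσ (hμ ▸ Set.inter_subset_left)
  have hμτ : μ ≤ τ := le_of_vertexSet_subset hS hμυ hτ (hμ ▸ Set.inter_subset_right)
  have hρυ : ρ ≤ υ := hρ.1.1.trans hσ
  have hρμ : ρ ≤ μ := le_of_vertexSet_subset hS hρυ hμυ
    (hμ ▸ Set.subset_inter (vertexSet_mono hρ.1.1) (vertexSet_mono hρ.1.2))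
  rw [le_antisymm hρμ (hρ.2 ⟨hμσ, hμτ⟩ hρμ), hμ]

end SimplicialPoset

section FaceRing

variable {R : Type} [CommRing R] {α : Type} [Fintype α] [PartialOrder α] [OrderBot α]

lemma mk_X_bot : π (X (⊥ : α) : MvPolynomial α R) = 1 := by
  rw [← sub_eq_zero, ← map_one (Ideal.Quotient.mk _), ← map_sub, Ideal.Quotient.eq_zero_iff_mem]
  exact Ideal.subset_span (Or.inl (Or.inl rfl))

lemma mk_X_mul_X_of_joins_eq_empty {σ τ : α} (h : joins σ τ = ∅) :
    π (X σ : MvPolynomial α R) * π (X τ) = 0 := by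
  rw [← map_mul, Ideal.Quotient.eq_zero_iff_mem]
  exact Ideal.subset_span (Or.inl (Or.inr ⟨σ, τ, h, rfl⟩))

lemma mk_X_mul_X {σ τ ρ : α} (hρ : ρ ∈ meets σ τ) :
    π (X σ : MvPolynomial α R) * π (X τ) =
      π (X ρ) * ∑ η ∈ (Set.toFinite (joins σ τ)).toFinset, π (X η) := by
  rcases (joins σ τ).eq_empty_or_nonempty with h | h
  · simp only [mk_X_mul_X_of_joins_eq_empty h, h, Set.Finite.toFinset_empty, Finset.sum_empty,
      mul_zero]
  · rw [← map_mul, ← map_sum, ← map_mul, Ideal.Quotient.mk_eq_mk_iff_sub_mem]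
    exact Ideal.subset_span (Or.inr ⟨σ, τ, ρ, hρ, h, rfl⟩)

lemma mk_X_mul_X_of_bot_mem_meets {σ τ : α} (h : ⊥ ∈ meets σ τ) :
    π (X σ : MvPolynomial α R) * π (X τ) =
      ∑ η ∈ (Set.toFinite (joins σ τ)).toFinset, π (X η) := by
  rw [mk_X_mul_X h, mk_X_bot, one_mul]

lemma straightening_le_ker {S : Type} [CommRing S] (f : MvPolynomial α R →+* S)
    (hbot : f (X ⊥) = 1) (hempty : ∀ σ τ : α, joins σ τ = ∅ → f (X σ) * f (X τ) = 0)
    (hmeet : ∀ σ τ ρ : α, ρ ∈ meets σ τ → (joins σ τ).Nonempty →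
      f (X σ) * f (X τ) = f (X ρ) * ∑ η ∈ (Set.toFinite (joins σ τ)).toFinset, f (X η)) :
    straightening R α ≤ RingHom.ker f := by
  rw [straightening, Ideal.span_le]
  rintro p ((rfl | ⟨σ, τ, h, rfl⟩) | ⟨σ, τ, ρ, hρ, h, rfl⟩)
  · rw [SetLike.mem_coe, RingHom.mem_ker, map_sub, map_one, hbot, sub_self]
  · rw [SetLike.mem_coe, RingHom.mem_ker, map_mul, hempty σ τ h]
  · rw [SetLike.mem_coe, RingHom.mem_ker, map_sub, map_mul, map_mul, map_sum, hmeet σ τ ρ hρ h,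
      sub_self]

end FaceRing

section ProductFormula

variable {R : Type} [CommRing R] {α : Type} [Fintype α] [PartialOrder α] [OrderBot α]

theorem prod_mk_X_eq_sum (hS : IsSimplicialPoset α) (s : Finset α) (hs : ∀ i ∈ s, IsAtom i) :
    ∏ i ∈ s, π (X i : MvPolynomial α R) =
      ∑ τ ∈ (Set.toFinite {τ : α | vertexSet τ = s}).toFinset, π (X τ) := by
  classical
  induction s using Finset.induction_on with
  | empty =>
    have hbot : {τ : α | vertexSet τ = ↑(∅ : Finset α)} = {⊥} := by
      ext τ
      simpa using ⟨eq_bot_of_vertexSet_eq_empty hS, fun h => h ▸ vertexSet_bot⟩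
    simp only [Finset.prod_empty, hbot, Set.Finite.toFinset_singleton,
      Finset.sum_singleton, mk_X_bot]
  | insert j s hj ih =>
    have hj_atom := hs j (Finset.mem_insert_self j s)
    rw [Finset.prod_insert hj, ih fun i hi => hs i (Finset.mem_insert_of_mem hi), Finset.mul_sum]
    have hmeet : ∀ τ : α, vertexSet τ = s → ⊥ ∈ meets j τ := fun τ hτ =>
      bot_mem_meets fun ρ hρj hρτ => (hj_atom.le_iff.mp hρj).resolve_right fun h =>
        hj (Finset.mem_coe.mp (hτ ▸ ⟨hj_atom, h ▸ hρτ⟩))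
    have hjoins : ∀ τ : α, vertexSet τ = s → ∀ η,
        η ∈ joins j τ ↔ τ ≤ η ∧ vertexSet η = ↑(insert j s) := by
      intro τ hτ η
      rw [mem_joins_iff hS, hj_atom.vertexSet_eq, hτ, Finset.coe_insert, Set.insert_eq]
      exact ⟨fun h => ⟨h.2.1, h.2.2⟩, fun h => ⟨(h.2.symm ▸ Set.mem_union_left _ rfl :
        j ∈ vertexSet η).2, h⟩⟩
    rw [Finset.sum_congr rfl fun τ hτ => mk_X_mul_X_of_bot_mem_meets
      (hmeet τ (by simpa using hτ))]
    refine Finset.sum_sum_eq_sum_of_existsUnique (fun τ hτ η hη => ?_) (fun η hη => ?_) _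
    · simp only [Set.Finite.mem_toFinset, Set.mem_ofPred_eq] at hτ hη ⊢
      exact ((hjoins τ hτ η).mp hη).2
    · simp only [Set.Finite.mem_toFinset, Set.mem_ofPred_eq] at hη ⊢
      obtain ⟨τ, hτη, hτ⟩ := exists_le_vertexSet_eq hS
        (hη ▸ Finset.coe_subset.mpr (Finset.subset_insert j s))
      refine ⟨τ, ⟨hτ, (hjoins τ hτ η).mpr ⟨hτη, hη⟩⟩, fun τ' ⟨hτ', hητ'⟩ => ?_⟩
      exact eq_of_vertexSet_eq hS ((hjoins τ' hτ' η).mp hητ').1 hτη (hτ'.trans hτ.symm)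

end ProductFormula

namespace AssocComplex

variable {α : Type} [PartialOrder α] [OrderBot α]

def fold (σ : α) : AssocComplex α := ⟨vertexSet σ, σ, rfl⟩

lemma coe_fold (σ : α) : (fold σ).1 = vertexSet σ := rfl

lemma le_def {F G : AssocComplex α} : F ≤ G ↔ F.1 ⊆ G.1 := Iff.rfl

lemma coe_eq_empty_iff {F : AssocComplex α} : F.1 = ∅ ↔ F = ⊥ :=
  ⟨fun h => Subtype.ext (h.trans vertexSet_bot.symm), fun h => h ▸ vertexSet_bot⟩

lemma isAtom_of_mem {F : AssocComplex α} {i : α} (hi : i ∈ F.1) : IsAtom i := by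
  obtain ⟨σ, hσ⟩ := F.2
  exact (hσ ▸ hi : i ∈ vertexSet σ).1

variable [Fintype α]

lemma exists_coe_eq (hS : IsSimplicialPoset α) {F : AssocComplex α} {s : Set α} (h : s ⊆ F.1) :
    ∃ G : AssocComplex α, G.1 = s := by
  obtain ⟨σ, hσ⟩ := F.2
  obtain ⟨τ, -, hτ⟩ := exists_le_vertexSet_eq hS (hσ ▸ h)
  exact ⟨fold τ, hτ⟩

lemma mem_joins_iff (hS : IsSimplicialPoset α) {F G H : AssocComplex α} :
    H ∈ joins F G ↔ H.1 = F.1 ∪ G.1 := by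
  constructor
  · rintro ⟨⟨hF, hG⟩, hmin⟩
    obtain ⟨U, hU⟩ := exists_coe_eq hS (Set.union_subset hF hG)
    have hUH : U ≤ H := le_def.mpr (hU ▸ Set.union_subset hF hG)
    refine (Set.union_subset hF hG).antisymm' (hU ▸ hmin (y := U) ?_ hUH)
    exact ⟨le_def.mpr (hU ▸ Set.subset_union_left), le_def.mpr (hU ▸ Set.subset_union_right)⟩
  · intro h
    refine ⟨⟨le_def.mpr (h ▸ Set.subset_union_left), le_def.mpr (h ▸ Set.subset_union_right)⟩,
      fun U hU _ => le_def.mpr (h ▸ Set.union_subset hU.1 hU.2)⟩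

lemma coe_eq_inter_of_mem_meets (hS : IsSimplicialPoset α) {F G ρ : AssocComplex α}
    (hρ : ρ ∈ meets F G) : ρ.1 = F.1 ∩ G.1 := by
  obtain ⟨U, hU⟩ := exists_coe_eq hS (Set.inter_subset_left (s := F.1) (t := G.1))
  have hρU : ρ ≤ U := le_def.mpr (hU ▸ Set.subset_inter hρ.1.1 hρ.1.2)
  refine (Set.subset_inter hρ.1.1 hρ.1.2).antisymm (hU ▸ hρ.2 (y := U) ?_ hρU)
  exact ⟨le_def.mpr (hU ▸ Set.inter_subset_left), le_def.mpr (hU ▸ Set.inter_subset_right)⟩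

end AssocComplex

section Maps

variable {R : Type} [CommRing R] {α : Type} [PartialOrder α] [OrderBot α]

noncomputable def faceToMonomial [Fintype α] :
    MvPolynomial (AssocComplex α) R →+* MvPolynomial α R :=
  eval₂Hom C fun F => ∏ i ∈ (Set.toFinite F.1).toFinset, X i

open Classical in
noncomputable def vertexToFace : MvPolynomial α R →+* MvPolynomial (AssocComplex α) R :=
  eval₂Hom C fun i => if IsAtom i then X (AssocComplex.fold i) else 0

open Classical in
/-- The restriction of the face ring to the Boolean interval below `σ`, whose face ring is the
polynomial ring on the vertices of `σ`. -/
noncomputable def restrictFace [Fintype α] (σ : α) : MvPolynomial α R →+* MvPolynomial α R :=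
  eval₂Hom C fun τ => if τ ≤ σ then ∏ i ∈ (Set.toFinite (vertexSet τ)).toFinset, X i else 0

lemma faceToMonomial_X [Fintype α] (F : AssocComplex α) :
    faceToMonomial (X F : MvPolynomial _ R) = ∏ i ∈ (Set.toFinite F.1).toFinset, X i :=
  eval₂Hom_X' _ _ _

lemma vertexToFace_X_of_isAtom {i : α} (hi : IsAtom i) :
    vertexToFace (X i : MvPolynomial α R) = X (AssocComplex.fold i) := by
  rw [vertexToFace, eval₂Hom_X', if_pos hi]

lemma vertexToFace_X_of_not_isAtom {i : α} (hi : ¬ IsAtom i) :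
    vertexToFace (X i : MvPolynomial α R) = 0 := by
  rw [vertexToFace, eval₂Hom_X', if_neg hi]

open Classical in
lemma restrictFace_X [Fintype α] (σ τ : α) :
    restrictFace σ (X τ : MvPolynomial α R) =
      if τ ≤ σ then ∏ i ∈ (Set.toFinite (vertexSet τ)).toFinset, X i else 0 :=
  eval₂Hom_X' _ _ _

end Maps

section AssocComplexProductFormula

variable {R : Type} [CommRing R] {α : Type} [Fintype α] [PartialOrder α] [OrderBot α]

open AssocComplex in
/-- The right-hand side has at most one term: `w_s` if `s` is a face, none otherwise. -/
theorem prod_mk_vertexToFace_X (hS : IsSimplicialPoset α) (s : Finset α) :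
    ∏ i ∈ s, π (vertexToFace (X i) : MvPolynomial (AssocComplex α) R) =
      ∑ F ∈ (Set.toFinite {F : AssocComplex α | F.1 = s}).toFinset, π (X F) := by
  classical
  induction s using Finset.induction_on with
  | empty =>
    have hbot : {F : AssocComplex α | F.1 = ↑(∅ : Finset α)} = {⊥} := by
      ext F
      simpa using coe_eq_empty_iff
    simp only [Finset.prod_empty, hbot, Set.Finite.toFinset_singleton, Finset.sum_singleton,
      mk_X_bot]
  | insert j s hj ih =>
    rw [Finset.prod_insert hj, ih]
    by_cases hj_atom : IsAtom j
    · have hjoins : ∀ F : AssocComplex α, F.1 = s → ∀ H,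
          H ∈ joins (fold j) F ↔ H.1 = ↑(insert j s) := by
        intro F hF H
        rw [AssocComplex.mem_joins_iff hS, coe_fold, hj_atom.vertexSet_eq, hF, Finset.coe_insert,
          Set.insert_eq]
      have hmeet : ∀ F : AssocComplex α, F.1 = s → ⊥ ∈ meets (fold j) F := by
        intro F hF
        refine bot_mem_meets fun ρ hρj hρF => coe_eq_empty_iff.mp ?_
        refine Set.eq_empty_of_forall_notMem fun i hi => hj ?_
        have hij : i = j := by
          simpa [coe_fold, hj_atom.vertexSet_eq] using le_def.mp hρj hi
        exact Finset.mem_coe.mp (hF ▸ hij ▸ le_def.mp hρF hi)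
      rw [vertexToFace_X_of_isAtom hj_atom, Finset.mul_sum,
        Finset.sum_congr rfl fun F hF => mk_X_mul_X_of_bot_mem_meets (hmeet F (by simpa using hF))]
      refine Finset.sum_sum_eq_sum_of_existsUnique (fun F hF H hH => ?_) (fun H hH => ?_) _
      · simp only [Set.Finite.mem_toFinset, Set.mem_ofPred_eq] at hF hH ⊢
        exact (hjoins F hF H).mp hH
      · simp only [Set.Finite.mem_toFinset, Set.mem_ofPred_eq] at hH ⊢
        obtain ⟨F, hF⟩ := exists_coe_eq hS (hH ▸ Finset.coe_subset.mpr (Finset.subset_insert j s))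
        exact ⟨F, ⟨hF, (hjoins F hF H).mpr hH⟩, fun F' hF' => Subtype.ext (hF'.1.trans hF.symm)⟩
    · have hempty : {F : AssocComplex α | F.1 = ↑(insert j s)} = ∅ :=
        Set.eq_empty_of_forall_notMem fun F hF =>
          hj_atom (isAtom_of_mem (F := F) (hF ▸ Finset.mem_coe.mpr (Finset.mem_insert_self j s)))
      simp only [vertexToFace_X_of_not_isAtom hj_atom, map_zero, zero_mul, hempty,
        Set.Finite.toFinset_empty, Finset.sum_empty]

end AssocComplexProductFormula

section Folding

variable {R : Type} [CommRing R] {α : Type} [Fintype α] [PartialOrder α] [OrderBot α]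

theorem prod_mk_X_toFinset_eq_sum (hS : IsSimplicialPoset α) (s : Set α)
    (hs : ∀ i ∈ s, IsAtom i) :
    ∏ i ∈ (Set.toFinite s).toFinset, π (X i : MvPolynomial α R) =
      ∑ τ ∈ (Set.toFinite {τ : α | vertexSet τ = s}).toFinset, π (X τ) := by
  simpa using prod_mk_X_eq_sum (R := R) hS (Set.toFinite s).toFinset (by simpa using hs)

lemma straightening_le_ker_faceToMonomial (hS : IsSimplicialPoset α) :
    straightening R (AssocComplex α) ≤
      RingHom.ker ((Ideal.Quotient.mk (straightening R α)).comp faceToMonomial) := by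
  refine straightening_le_ker _ ?_ (fun F G h => ?_) (fun F G ρ hρ h => ?_) <;>
    simp only [RingHom.comp_apply]
  · rw [faceToMonomial_X, AssocComplex.coe_eq_empty_iff.mpr rfl]
    simp
  · rw [← map_mul, faceToMonomial_X, faceToMonomial_X,
      ← prod_toFinset_inter_mul_prod_toFinset_union, map_mul, map_prod, map_prod,
      prod_mk_X_toFinset_eq_sum hS (F.1 ∪ G.1) fun i hi => hi.elim AssocComplex.isAtom_of_mem
        AssocComplex.isAtom_of_mem]
    have hnone : {τ : α | vertexSet τ = F.1 ∪ G.1} = ∅ :=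
      Set.eq_empty_of_forall_notMem fun τ hτ => by
        simpa [h] using (AssocComplex.mem_joins_iff hS (H := AssocComplex.fold τ)).mpr hτ
    simp only [hnone, Set.Finite.toFinset_empty, Finset.sum_empty, mul_zero]
  · obtain ⟨H, hH⟩ := h
    have hjoins : joins F G = {H} := Set.eq_singleton_iff_unique_mem.mpr ⟨hH, fun H' hH' =>
      Subtype.ext (((AssocComplex.mem_joins_iff hS).mp hH').trans
        ((AssocComplex.mem_joins_iff hS).mp hH).symm)⟩
    simp only [hjoins, Set.Finite.toFinset_singleton, Finset.sum_singleton, faceToMonomial_X,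
      ← map_mul]
    rw [AssocComplex.coe_eq_inter_of_mem_meets hS hρ, (AssocComplex.mem_joins_iff hS).mp hH,
      prod_toFinset_inter_mul_prod_toFinset_union]

end Folding

section Restriction

variable {R : Type} [CommRing R] {α : Type} [Fintype α] [PartialOrder α] [OrderBot α]

open Classical in
lemma sum_restrictFace_X_joins (hS : IsSimplicialPoset α) (σ σ' τ' : α) :
    ∑ η ∈ (Set.toFinite (joins σ' τ')).toFinset, restrictFace σ (X η : MvPolynomial α R) =
      if σ' ≤ σ ∧ τ' ≤ σ then
        ∏ i ∈ (Set.toFinite (vertexSet σ' ∪ vertexSet τ')).toFinset, X i else 0 := by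
  split_ifs with h
  · obtain ⟨η₀, hη₀, hη₀σ⟩ := exists_mem_joins_le hS h.1 h.2
    have hV := ((mem_joins_iff hS).mp hη₀).2.2
    rw [Finset.sum_eq_single_of_mem η₀ (by simpa using hη₀) fun η hη hne => ?_, restrictFace_X,
      if_pos hη₀σ, hV]
    have hηV := ((mem_joins_iff hS).mp (by simpa using hη)).2.2
    rw [restrictFace_X, if_neg fun hησ => hne (eq_of_vertexSet_eq hS hησ hη₀σ (hηV.trans hV.symm))]
  · refine Finset.sum_eq_zero fun η hη => ?_
    rw [Set.Finite.mem_toFinset] at hη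
    rw [restrictFace_X, if_neg fun hησ => h ⟨hη.1.1.trans hησ, hη.1.2.trans hησ⟩]

lemma straightening_le_ker_restrictFace (hS : IsSimplicialPoset α) (σ : α) :
    straightening R α ≤ RingHom.ker (restrictFace σ : MvPolynomial α R →+* _) := by
  refine straightening_le_ker _ ?_ (fun σ' τ' h => ?_) (fun σ' τ' ρ hρ _ => ?_)
  · rw [restrictFace_X, if_pos bot_le, Set.Finite.toFinset_eq_empty.mpr vertexSet_bot,
      Finset.prod_empty]
  · rw [restrictFace_X, restrictFace_X]
    by_cases h₁ : σ' ≤ σ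
    · by_cases h₂ : τ' ≤ σ
      · obtain ⟨η, hη, -⟩ := exists_mem_joins_le hS h₁ h₂
        exact absurd hη (h ▸ Set.notMem_empty η)
      · rw [if_neg h₂, mul_zero]
    · rw [if_neg h₁, zero_mul]
  · rw [sum_restrictFace_X_joins hS, restrictFace_X, restrictFace_X, restrictFace_X]
    by_cases h : σ' ≤ σ ∧ τ' ≤ σ
    · rw [if_pos h, if_pos h.1, if_pos h.2, if_pos (hρ.1.1.trans h.1),
        vertexSet_eq_inter_of_mem_meets hS hρ h.1 h.2, prod_toFinset_inter_mul_prod_toFinset_union]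
    · rw [if_neg h, mul_zero]
      rcases not_and_or.mp h with h | h
      · rw [if_neg h, zero_mul]
      · rw [if_neg h, mul_zero]

lemma restrictFace_comp_faceToMonomial (σ : α) :
    (restrictFace σ).comp faceToMonomial =
      (restrictVars (Set.Iic σ)).comp (faceToMonomial : MvPolynomial (AssocComplex α) R →+* _) := by
  refine MvPolynomial.ringHom_ext (fun r => by simp [faceToMonomial, restrictFace, restrictVars])
    fun F => ?_
  simp only [RingHom.comp_apply, faceToMonomial_X, map_prod]
  refine Finset.prod_congr rfl fun i hi => ?_
  have hi := AssocComplex.isAtom_of_mem ((Set.Finite.mem_toFinset _).mp hi)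
  simp only [restrictFace_X, restrictVars_X, hi.vertexSet_eq, Set.Finite.toFinset_singleton,
    Finset.prod_singleton]
  rfl

end Restriction

section Injectivity

variable {R : Type} [CommRing R] {α : Type} [Fintype α] [PartialOrder α] [OrderBot α]

lemma mk_comp_vertexToFace_comp_faceToMonomial (hS : IsSimplicialPoset α) :
    ((Ideal.Quotient.mk (straightening R (AssocComplex α))).comp vertexToFace).comp
      faceToMonomial = Ideal.Quotient.mk (straightening R (AssocComplex α)) := by
  refine MvPolynomial.ringHom_ext (fun r => by simp [faceToMonomial, vertexToFace]) fun F => ?_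
  have hF : {G : AssocComplex α | G.1 = ↑(Set.toFinite F.1).toFinset} = {F} := by
    ext G
    simp only [Set.Finite.coe_toFinset, Set.mem_ofPred_eq, Set.mem_singleton_iff]
    exact ⟨Subtype.ext, fun h => h ▸ rfl⟩
  simp only [RingHom.comp_apply, faceToMonomial_X, map_prod]
  rw [prod_mk_vertexToFace_X hS, hF, Set.Finite.toFinset_singleton, Finset.sum_singleton]

lemma mk_vertexToFace_monomial_eq_zero (hS : IsSimplicialPoset α) {m : α →₀ ℕ}
    (hm : ∀ σ : α, ¬ ↑m.support ⊆ Set.Iic σ) (c : R) :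
    π (vertexToFace (monomial m c) : MvPolynomial (AssocComplex α) R) = 0 := by
  have hnone : {F : AssocComplex α | F.1 = ↑m.support} = ∅ :=
    Set.eq_empty_of_forall_notMem fun F hF => by
      obtain ⟨σ, hσ⟩ := F.2
      exact hm σ fun i hi => ((hσ ▸ hF.symm ▸ hi : i ∈ vertexSet σ)).2
  have hdvd : ∏ i ∈ m.support, vertexToFace (X i : MvPolynomial α R) ∣
      vertexToFace (monomial m c) := by
    rw [monomial_eq, Finsupp.prod, map_mul, map_prod]
    simp only [map_pow]
    exact (Finset.prod_dvd_prod_of_dvd _ _ fun i hi =>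
      dvd_pow_self _ (Finsupp.mem_support_iff.mp hi)).mul_left _
  have hzero := map_dvd (Ideal.Quotient.mk (straightening R (AssocComplex α))) hdvd
  rwa [map_prod, prod_mk_vertexToFace_X hS, hnone, Set.Finite.toFinset_empty, Finset.sum_empty,
    zero_dvd_iff] at hzero

lemma mk_eq_zero_of_forall_restrictVars_eq_zero (hS : IsSimplicialPoset α)
    (p : MvPolynomial (AssocComplex α) R)
    (h : ∀ σ : α, restrictVars (Set.Iic σ) (faceToMonomial p) = 0) : π p = 0 := by
  classical
  rw [← RingHom.congr_fun (mk_comp_vertexToFace_comp_faceToMonomial hS) p, RingHom.comp_apply,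
    RingHom.comp_apply, ← support_sum_monomial_coeff (faceToMonomial p), map_sum, map_sum]
  refine Finset.sum_eq_zero fun m hm => mk_vertexToFace_monomial_eq_zero hS (fun σ hσ => ?_) _
  have hcoeff := coeff_restrictVars (Set.Iic σ) m (faceToMonomial p)
  rw [h σ, coeff_zero, if_pos hσ] at hcoeff
  exact mem_support_iff.mp hm hcoeff.symm

theorem ker_mk_comp_faceToMonomial_le (hS : IsSimplicialPoset α) :
    RingHom.ker ((Ideal.Quotient.mk (straightening R α)).comp faceToMonomial) ≤
      straightening R (AssocComplex α) := by
  intro p hp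
  rw [RingHom.mem_ker, RingHom.comp_apply, Ideal.Quotient.eq_zero_iff_mem] at hp
  rw [← Ideal.Quotient.eq_zero_iff_mem]
  refine mk_eq_zero_of_forall_restrictVars_eq_zero hS p fun σ => ?_
  rw [← RingHom.comp_apply, ← restrictFace_comp_faceToMonomial, RingHom.comp_apply]
  exact straightening_le_ker_restrictFace hS σ hp

end Injectivity

section Range

variable {α : Type} [Fintype α] [PartialOrder α] [OrderBot α]

lemma range_mk_comp_faceToMonomial :
    ((Ideal.Quotient.mk (straightening ℤ α)).comp faceToMonomial).range =
      Subring.closure {x : faceRing ℤ α | ∃ i : α, IsAtom i ∧ x = π (X i)} := by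
  refine le_antisymm ?_ (Subring.closure_le.mpr ?_)
  · rintro _ ⟨p, rfl⟩
    induction p using MvPolynomial.induction_on with
    | C a =>
      rw [← RingHom.comp_apply, eq_intCast]
      exact intCast_mem _ a
    | add p q hp hq =>
      rw [map_add]
      exact add_mem hp hq
    | mul_X p F hp =>
      rw [map_mul, RingHom.comp_apply (x := X F), faceToMonomial_X, map_prod]
      refine mul_mem hp (Subring.prod_mem _ fun i hi => Subring.subset_closure ⟨i, ?_, rfl⟩)
      exact AssocComplex.isAtom_of_mem ((Set.Finite.mem_toFinset _).mp hi)
  · rintro _ ⟨i, hi, rfl⟩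
    refine ⟨X (AssocComplex.fold i), ?_⟩
    simp [faceToMonomial_X, AssocComplex.coe_fold, hi.vertexSet_eq]

end Range

theorem folding_map_faceRing_injective_general {α : Type} [Fintype α] [PartialOrder α] [OrderBot α]
    (hS : IsSimplicialPoset α) :
    ∃ g : faceRing ℤ (AssocComplex α) →+* faceRing ℤ α,
      (∀ F : AssocComplex α,
        g (Ideal.Quotient.mk (straightening ℤ (AssocComplex α)) (X F)) =
          Ideal.Quotient.mk (straightening ℤ α)
            (∑ σ ∈ (Set.toFinite {σ : α | vertexSet σ = F.1}).toFinset, X σ)) ∧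
      Function.Injective g ∧
      g.range = Subring.closure
        {x : faceRing ℤ α | ∃ i : α, IsAtom i ∧
          x = Ideal.Quotient.mk (straightening ℤ α) (X i)} := by
  set f := (Ideal.Quotient.mk (straightening ℤ α)).comp faceToMonomial
  have hf : ∀ p ∈ straightening ℤ (AssocComplex α), f p = 0 :=
    fun p hp => straightening_le_ker_faceToMonomial hS hp
  refine ⟨Ideal.Quotient.lift _ f hf, fun F => ?_,
    RingHom.lift_injective_of_ker_le_ideal _ hf (ker_mk_comp_faceToMonomial_le hS), ?_⟩
  · rw [Ideal.Quotient.lift_mk, RingHom.comp_apply, faceToMonomial_X, map_prod, map_sum,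
      prod_mk_X_toFinset_eq_sum hS F.1 fun _ => AssocComplex.isAtom_of_mem]
  · rw [← range_mk_comp_faceToMonomial, RingHom.range_eq_map,
      ← RingHom.range_eq_top_of_surjective _ Ideal.Quotient.mk_surjective, RingHom.map_range,
      Ideal.Quotient.lift_comp_mk]

/-- the folding map `σ ↦ V(σ)` induces an injective ring homomorphism
`ℤ[K_S] → ℤ[S]`, sending `w_F ↦ ∑_{V(σ)=F} v_σ`, whose image is the subring of
`ℤ[S]` generated by the degree-two elements `v_i` (for vertices `i`). -/
theorem folding_map_faceRing_injective {α : Type} [Fintype α] [PartialOrder α] [OrderBot α]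
    [DecidableEq α] (hS : IsSimplicialPoset α) :
    ∃ g : faceRing ℤ (AssocComplex α) →+* faceRing ℤ α,
      (∀ F : AssocComplex α,
        g (Ideal.Quotient.mk (straightening ℤ (AssocComplex α)) (X F)) =
          Ideal.Quotient.mk (straightening ℤ α)
            (∑ σ ∈ (Set.toFinite {σ : α | vertexSet σ = F.1}).toFinset, X σ)) ∧
      Function.Injective g ∧
      g.range = Subring.closure
        {x : faceRing ℤ α | ∃ i : α, IsAtom i ∧
          x = Ideal.Quotient.mk (straightening ℤ α) (X i)} :=
  folding_map_faceRing_injective_general hS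
end

section
/- For every simplicial poset S of rank n, the rational face ring Q[S] admits a linear system of parameters consisting of n degree-two elements. -/
/-!
Take `tᵢ = ∑_v c_vⁱ v` (over the vertices `v`, for `i < n`) with pairwise distinct scalars `c_v`.
It suffices to show that every `v_σ` with `σ ≠ ⊥` is nilpotent modulo the straightening relations
and the `tᵢ`, i.e. vanishes at every point (a ring map to a domain) of that quotient: the quotient
is then generated by finitely many nilpotents and `v_⊥ = 1`, hence finite dimensional.

At such a point, the relation `v_σ v_G = v_ρ ∑_{η ∈ σ ∨ G} v_η` shows that all non-vanishing faces
lie below a maximal non-vanishing face `G`. As `G` has at most `n` vertices, the Vandermonde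
system `tᵢ = 0` forces every vertex to vanish. Finally, writing a face `σ ≤ G` as the join of a
vertex `v` and its complement `τ` in the Boolean interval `[⊥, G]`, the straightening relation
for `τ, v` reads `v_τ v_v = v_σ`, so `σ` vanishes as well.
-/

open MvPolynomial

open Function

theorem Finset.eq_zero_of_forall_sum_pow_mul_eq_zero {K ι : Type*} [CommRing K] [IsDomain K]
    (s : Finset ι) {c y : ι → K} (hc : Set.InjOn c s)
    (h : ∀ i < s.card, ∑ w ∈ s, c w ^ i * y w = 0) : ∀ w ∈ s, y w = 0 := by
  let e := s.equivFin
  have hy := Matrix.eq_zero_of_forall_pow_sum_mul_pow_eq_zero (f := fun j => c (e.symm j))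
    (v := fun j => y (e.symm j))
    (fun j k hjk => e.symm.injective (Subtype.ext (hc (e.symm j).2 (e.symm k).2 hjk)))
    fun i => by
      rw [← h i i.2, ← s.sum_coe_sort, ← e.symm.sum_comp]
      simp only [mul_comm]
  intro w hw
  simpa [e] using congrFun hy (e ⟨w, hw⟩)

theorem exists_atom_split_of_orderIso {α ι : Type*} [PartialOrder α] [OrderBot α]
    [DecidableEq ι] {G σ : α} (e : Set.Iic G ≃o Finset ι) (hσG : σ ≤ G) (hσ : σ ≠ ⊥) :
    ∃ τ v : α, IsAtom v ∧ (∀ u, u ≤ τ → u ≤ v → u = ⊥) ∧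
      ∀ η ≤ G, (τ ≤ η ∧ v ≤ η ↔ σ ≤ η) := by
  set s := e ⟨σ, hσG⟩ with hs
  obtain ⟨a, ha⟩ : s.Nonempty := by
    rw [Finset.nonempty_iff_ne_empty, ← Finset.bot_eq_empty, ← e.map_bot, ne_eq,
      EmbeddingLike.apply_eq_iff_eq]
    exact fun h => hσ (congrArg Subtype.val h)
  have hv : IsAtom (e.symm {a}) := (e.symm.isAtom_iff _).2 (Finset.isAtom_singleton a)
  refine ⟨e.symm (s.erase a), e.symm {a}, hv.of_isAtom_coe_Iic, fun u huτ huv => ?_,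
    fun η hη => ?_⟩
  · refine (hv.of_isAtom_coe_Iic.le_iff.1 huv).resolve_right fun hu => ?_
    have hvτ : e.symm {a} ≤ e.symm (s.erase a) := Subtype.coe_le_coe.1 (hu ▸ huτ)
    simpa using e.symm.le_iff_le.1 hvτ
  · change e.symm (s.erase a) ≤ ⟨η, hη⟩ ∧ e.symm {a} ≤ ⟨η, hη⟩ ↔
      (⟨σ, hσG⟩ : Set.Iic G) ≤ ⟨η, hη⟩
    rw [e.symm_apply_le, e.symm_apply_le, ← e.le_iff_le, ← hs, ← Finset.insert_erase ha,
      Finset.erase_insert_eq_erase, Finset.erase_idem, Finset.insert_subset_iff,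
      Finset.singleton_subset_iff, and_comm]

theorem exists_mem_meets {α : Type} [Finite α] [PartialOrder α] [OrderBot α] (σ τ : α) :
    ∃ ρ, ρ ∈ meets σ τ :=
  (Set.toFinite {x | x ≤ σ ∧ x ≤ τ}).exists_maximal ⟨⊥, bot_le, bot_le⟩

section FaceRing

variable {α : Type} [Fintype α] [PartialOrder α] [OrderBot α] {R : Type} [CommRing R]
  {K : Type*} [CommRing K] {f : MvPolynomial α R →+* K}

theorem map_X_bot_of_le_ker (hf : straightening R α ≤ RingHom.ker f) : f (X ⊥) = 1 := by
  have h := hf (Ideal.subset_span (.inl (.inl rfl)))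
  rwa [RingHom.mem_ker, map_sub, map_one, sub_eq_zero] at h

theorem map_X_mul_X_of_joins_eq_empty (hf : straightening R α ≤ RingHom.ker f) {σ τ : α}
    (h : joins σ τ = ∅) : f (X σ) * f (X τ) = 0 := by
  rw [← map_mul]
  exact hf (Ideal.subset_span (.inl (.inr ⟨σ, τ, h, rfl⟩)))

theorem map_X_mul_X_of_mem_meets (hf : straightening R α ≤ RingHom.ker f) {σ τ ρ : α}
    (hρ : ρ ∈ meets σ τ) (h : (joins σ τ).Nonempty) :
    f (X σ) * f (X τ) = f (X ρ) * ∑ η ∈ (Set.toFinite (joins σ τ)).toFinset, f (X η) := by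
  have h := hf (Ideal.subset_span (.inr ⟨σ, τ, ρ, hρ, h, rfl⟩))
  rwa [RingHom.mem_ker, map_sub, sub_eq_zero, map_mul, map_mul, map_sum] at h

theorem exists_forall_le_of_map_X_ne_zero [IsDomain K]
    (hf : straightening R α ≤ RingHom.ker f) : ∃ G : α, ∀ σ, f (X σ) ≠ 0 → σ ≤ G := by
  obtain ⟨G, hG⟩ := (Set.toFinite {σ : α | f (X σ) ≠ 0}).exists_maximal
    ⟨⊥, by simp [map_X_bot_of_le_ker hf]⟩
  refine ⟨G, fun σ hσ => ?_⟩
  obtain ⟨ρ, hρ⟩ := exists_mem_meets σ G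
  have hne : f (X σ) * f (X G) ≠ 0 := mul_ne_zero hσ hG.1
  have hjoins : (joins σ G).Nonempty := Set.nonempty_iff_ne_empty.2 fun h =>
    hne (map_X_mul_X_of_joins_eq_empty hf h)
  rw [map_X_mul_X_of_mem_meets hf hρ hjoins] at hne
  obtain ⟨η, hη, hηne⟩ := Finset.exists_ne_zero_of_sum_ne_zero (right_ne_zero_of_mul hne)
  rw [Set.Finite.mem_toFinset] at hη
  exact hη.1.1.trans (hG.2 hηne hη.1.2)

theorem map_X_eq_zero_of_forall_isAtom [IsDomain K] (hS : IsSimplicialPoset α)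
    (hf : straightening R α ≤ RingHom.ker f) (hatom : ∀ v, IsAtom v → f (X v) = 0)
    {σ : α} (hσ : σ ≠ ⊥) : f (X σ) = 0 := by
  obtain ⟨G, hG⟩ := exists_forall_le_of_map_X_ne_zero hf
  by_contra hne
  obtain ⟨k, ⟨e⟩⟩ := hS G
  obtain ⟨τ, v, hv, hdisj, hjoin⟩ := exists_atom_split_of_orderIso
    ((OrderIso.setCongr _ _ Set.Icc_bot.symm).trans e) (hG σ hne) hσ
  have hmeet : ⊥ ∈ meets τ v := ⟨⟨bot_le, bot_le⟩, fun u hu _ => (hdisj u hu.1 hu.2).le⟩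
  have hσj : σ ∈ joins τ v :=
    ⟨(hjoin σ (hG σ hne)).2 le_rfl, fun u hu huσ => (hjoin u (huσ.trans (hG σ hne))).1 hu⟩
  have hsum : ∑ η ∈ (Set.toFinite (joins τ v)).toFinset, f (X η) = f (X σ) := by
    refine Finset.sum_eq_single_of_mem σ (by simpa using hσj) fun η hη hησ => ?_
    by_contra hηne
    rw [Set.Finite.mem_toFinset] at hη
    have hση : σ ≤ η := (hjoin η (hG η hηne)).1 hη.1
    exact hησ (le_antisymm (hη.2 hσj.1 hση) hση)
  have h := map_X_mul_X_of_mem_meets hf hmeet ⟨σ, hσj⟩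
  rw [hsum, map_X_bot_of_le_ker hf, one_mul, hatom v hv, mul_zero] at h
  exact hne h.symm

end FaceRing

theorem MvPolynomial.finite_of_surjective {ι R A : Type*} [Finite ι] [CommRing R] [CommRing A]
    [Algebra R A] (g : MvPolynomial ι R →ₐ[R] A) (hg : Surjective g)
    (h : ∀ i, IsIntegral R (g (X i))) : Module.Finite R A := by
  have hadj : Algebra.adjoin R (Set.range fun i => g (X i)) = ⊤ := by
    rw [Set.range_comp' g X, ← AlgHom.map_adjoin, adjoin_range_X, Algebra.map_top,
      AlgHom.range_eq_top]
    exact hg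
  have := Algebra.finite_adjoin_of_finite_of_isIntegral (Set.finite_range _)
    (Set.forall_mem_range.2 h)
  rw [hadj] at this
  exact Module.Finite.equiv Subalgebra.topEquiv.toLinearEquiv

section Lsop

variable {α : Type} [Fintype α] [PartialOrder α] [OrderBot α] [DecidablePred (IsAtom (α := α))]

noncomputable def vandermondeForm {R : Type} [CommRing R] (c : α → R) (i : ℕ) : MvPolynomial α R :=
  ∑ j ∈ Finset.univ.filter (fun j : α => IsAtom j), C (c j ^ i) * X j

theorem map_X_eq_zero_of_isAtom {K : Type*} [CommRing K] [IsDomain K] {R : Type} [Field R]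
    {n : ℕ} (hrank : ∀ σ : α, srank σ ≤ n) {c : α → R} (hc : Injective c)
    {f : MvPolynomial α R →+* K} (hf : straightening R α ≤ RingHom.ker f)
    (ht : ∀ i < n, f (vandermondeForm c i) = 0) {v : α} (hv : IsAtom v) : f (X v) = 0 := by
  classical
  obtain ⟨G, hG⟩ := exists_forall_le_of_map_X_ne_zero hf
  by_contra hne
  set W := Finset.univ.filter (fun u : α => IsAtom u ∧ u ≤ G)
  have hcard : W.card ≤ n := by
    have hW : vertexSet G = W := by ext; simp [vertexSet, W]
    simpa [srank, hW] using hrank G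
  have hsum : ∀ i < W.card, ∑ w ∈ W, f (C (c w)) ^ i * f (X w) = 0 := by
    intro i hi
    rw [← ht i (hi.trans_le hcard), vandermondeForm, map_sum]
    simp only [map_mul, map_pow]
    refine Finset.sum_subset (fun u hu => by simp_all [W]) fun u hu huW => ?_
    have hu : ¬ u ≤ G := fun h => huW (by simp_all [W])
    rw [not_imp_comm.1 (hG u) hu, mul_zero]
  have hinj : Set.InjOn (fun w => f (C (c w))) W :=
    ((f.comp C).injective.comp hc).injOn
  exact hne (W.eq_zero_of_forall_sum_pow_mul_eq_zero hinj hsum v (by simp [W, hv, hG v hne]))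

theorem isNilpotent_map_X {A : Type*} [CommRing A] {R : Type} [Field R]
    (hS : IsSimplicialPoset α) {n : ℕ} (hrank : ∀ σ : α, srank σ ≤ n) {c : α → R}
    (hc : Injective c) {g : MvPolynomial α R →+* A} (hg : straightening R α ≤ RingHom.ker g)
    (ht : ∀ i < n, g (vandermondeForm c i) = 0) {σ : α} (hσ : σ ≠ ⊥) :
    IsNilpotent (g (X σ)) := by
  refine nilpotent_iff_mem_prime.2 fun J hJ => ?_
  have hf : straightening R α ≤ RingHom.ker ((Ideal.Quotient.mk J).comp g) :=
    hg.trans fun p hp => by simp [RingHom.mem_ker.1 hp]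
  rw [← Ideal.Quotient.eq_zero_iff_mem]
  exact map_X_eq_zero_of_forall_isAtom hS hf
    (fun v hv => map_X_eq_zero_of_isAtom hrank hc hf (fun i hi => by simp [ht i hi]) hv) hσ

theorem finiteDimensional_quotient_sup_span_vandermondeForm {K : Type} [Field K]
    (hS : IsSimplicialPoset α) {n : ℕ} (hrank : ∀ σ : α, srank σ ≤ n) {c : α → K}
    (hc : Injective c) :
    FiniteDimensional K (MvPolynomial α K ⧸
      (straightening K α ⊔ Ideal.span (Set.range fun i : Fin n => vandermondeForm c i))) := by
  set L := straightening K α ⊔ Ideal.span (Set.range fun i : Fin n => vandermondeForm c i)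
  have hL : straightening K α ≤ RingHom.ker (Ideal.Quotient.mk L) :=
    (Ideal.mk_ker (I := L)).symm ▸ le_sup_left
  have ht : ∀ i < n, Ideal.Quotient.mk L (vandermondeForm c i) = 0 := fun i hi =>
    Ideal.Quotient.eq_zero_iff_mem.2 (Ideal.mem_sup_right (Ideal.subset_span ⟨⟨i, hi⟩, rfl⟩))
  refine MvPolynomial.finite_of_surjective (Ideal.Quotient.mkₐ K L)
    (Ideal.Quotient.mkₐ_surjective K L) fun σ => ?_
  rw [Ideal.Quotient.mkₐ_eq_mk]
  by_cases hσ : σ = ⊥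
  · rw [hσ, map_X_bot_of_le_ker hL]
    exact isIntegral_one
  · obtain ⟨k, hk⟩ := isNilpotent_map_X hS hrank hc hL ht hσ
    exact IsIntegral.of_pow k.succ_pos (by rw [pow_succ, hk, zero_mul]; exact isIntegral_zero)

theorem finiteDimensional_faceRing_quotient_vandermondeForm {K : Type} [Field K]
    (hS : IsSimplicialPoset α) {n : ℕ} (hrank : ∀ σ : α, srank σ ≤ n) {c : α → K}
    (hc : Injective c) :
    FiniteDimensional K (faceRing K α ⧸ Ideal.span (Set.range fun i : Fin n =>
      Ideal.Quotient.mk (straightening K α) (vandermondeForm c i))) := by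
  rw [Set.range_comp' (Ideal.Quotient.mk _) fun i : Fin n => vandermondeForm c i,
    ← Ideal.map_span]
  have := finiteDimensional_quotient_sup_span_vandermondeForm hS hrank hc
  exact Module.Finite.equiv (DoubleQuot.quotQuotEquivQuotSupₐ K _ _).symm.toLinearEquiv

end Lsop

theorem exists_lsop_rational_general {α : Type}
    [Fintype α] [PartialOrder α] [OrderBot α]
    [DecidablePred (IsAtom (α := α))]
    (hS : IsSimplicialPoset α) (n : ℕ)
    (hn : Finset.univ.sup (srank : α → ℕ) = n) :
    ∃ lam : Fin n → α → ℚ,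
      FiniteDimensional ℚ (faceRing ℚ α ⧸ Ideal.span (Set.range fun i : Fin n =>
        Ideal.Quotient.mk (straightening ℚ α)
          (∑ j ∈ Finset.univ.filter (fun j : α => IsAtom j), C (lam i j) * X j))) := by
  set c : α → ℚ := fun j => Fintype.equivFin α j
  have hc : Injective c :=
    Nat.cast_injective.comp (Fin.val_injective.comp (Fintype.equivFin α).injective)
  have hrank : ∀ σ : α, srank σ ≤ n := fun σ => hn ▸ Finset.le_sup (Finset.mem_univ σ)
  exact ⟨fun i j => c j ^ (i : ℕ),
    finiteDimensional_faceRing_quotient_vandermondeForm hS hrank hc⟩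

/-- for every simplicial poset `S` of rank `n`, the rational face
ring `ℚ[S]` admits a linear system of parameters of `n` degree-two elements
`t_i = ∑_j λ_{ij} v_j` (so that `ℚ[S]/(t₁,…,t_n)` is finite dimensional). -/
theorem exists_lsop_rational {α : Type}
    [Fintype α] [PartialOrder α] [OrderBot α] [DecidableEq α]
    [DecidablePred (IsAtom (α := α))]
    (hS : IsSimplicialPoset α) (n : ℕ)
    (hn : Finset.univ.sup (srank : α → ℕ) = n) :
    ∃ lam : Fin n → α → ℚ,
      FiniteDimensional ℚ (faceRing ℚ α ⧸ Ideal.span (Set.range fun i : Fin n =>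
        Ideal.Quotient.mk (straightening ℚ α)
          (∑ j ∈ Finset.univ.filter (fun j : α => IsAtom j), C (lam i j) * X j))) :=
  exists_lsop_rational_general hS n hn
end

section
/- Let S be the simplicial cell complex obtained by gluing two 1-simplices σ, τ along their two common vertices 1, 2. Its face ring Z[S] = Z[v₁,v₂,v_σ,v_τ]/(v₁v₂ − v_σ − v_τ, v_σ v_τ) is a free module over Z[v₁,v₂] with basis {1, v_σ}. -/
/-! Eliminating `v_τ = v₁v₂ − v_σ` identifies `ℤ[S]` with `B[Y]/(Y(Y − v₁v₂))`, `B = ℤ[v₁,v₂]`,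
`Y ↦ v_σ`. Since `Y(Y − v₁v₂)` is monic of degree 2, division with remainder writes every
class uniquely as `p + qY`. -/

open MvPolynomial

/-- The face ring `ℤ[S] = ℤ[v₁,v₂,v_σ,v_τ]/(v₁v₂ − v_σ − v_τ, v_σ v_τ)` of the
simplicial cell complex obtained by gluing two 1-simplices `σ, τ` along their two
common vertices `1, 2`.  Variables: `0 ↦ v₁`, `1 ↦ v₂`, `2 ↦ v_σ`, `3 ↦ v_τ`. -/
noncomputable def twoSegmentsIdeal : Ideal (MvPolynomial (Fin 4) ℤ) :=
  Ideal.span {X 0 * X 1 - X 2 - X 3, X 2 * X 3}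

/-- The inclusion `ℤ[v₁,v₂] → ℤ[v₁,v₂,v_σ,v_τ]`. -/
noncomputable def inclTwo : MvPolynomial (Fin 2) ℤ →+* MvPolynomial (Fin 4) ℤ :=
  (rename (Fin.castLE (by norm_num))).toRingHom

namespace Polynomial

variable {R : Type*} [CommRing R]

theorem monic_X_mul_X_sub_C (c : R) : (X * (X - C c)).Monic :=
  monic_X.mul (monic_X_sub_C c)

theorem natDegree_X_mul_X_sub_C [Nontrivial R] (c : R) : (X * (X - C c)).natDegree = 2 := by
  rw [monic_X.natDegree_mul (monic_X_sub_C c), natDegree_X, natDegree_X_sub_C]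

end Polynomial

namespace AdjoinRoot

variable {R : Type*} [CommRing R] {f : Polynomial R}

theorem root_mul_sub_root {c : R} (hf : f = Polynomial.X * (Polynomial.X - Polynomial.C c)) :
    root f * (of f c - root f) = 0 := by
  have h : mk f (Polynomial.X * (Polynomial.X - Polynomial.C c)) = 0 :=
    mk_eq_zero.mpr (dvd_of_eq hf)
  rw [map_mul, map_sub, mk_X, mk_C] at h
  linear_combination -h

theorem of_add_of_mul_root_eq_mk (p q : R) :
    of f p + of f q * root f = mk f (Polynomial.C q * Polynomial.X + Polynomial.C p) := by
  rw [map_add, map_mul, mk_C, mk_C, mk_X, add_comm]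

theorem existsUnique_eq_of_add_of_mul_root (hf : f.Monic) (hdeg : f.natDegree = 2)
    (a : AdjoinRoot f) : ∃! pq : R × R, a = of f pq.1 + of f pq.2 * root f := by
  obtain _ | _ := subsingleton_or_nontrivial R
  · simp [Subsingleton.elim f 0] at hdeg
  have hmod (p q : R) : modByMonicHom hf (of f p + of f q * root f) =
      Polynomial.C q * Polynomial.X + Polynomial.C p := by
    rw [of_add_of_mul_root_eq_mk, modByMonicHom_mk, Polynomial.modByMonic_eq_self_iff hf,
      Polynomial.degree_eq_natDegree hf.ne_zero, hdeg]
    exact Polynomial.degree_linear_le.trans_lt (by norm_num)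
  have hdeg_mod : (modByMonicHom hf a).natDegree ≤ 1 := by
    obtain ⟨g₀, rfl⟩ := mk_surjective a
    have := Polynomial.natDegree_modByMonic_lt g₀ hf (by rintro rfl; simp at hdeg)
    rw [modByMonicHom_mk]
    omega
  set g := modByMonicHom hf a
  refine ⟨(g.coeff 0, g.coeff 1), ?_, ?_⟩
  · dsimp only
    rw [of_add_of_mul_root_eq_mk, ← Polynomial.eq_X_add_C_of_natDegree_le_one hdeg_mod]
    exact (mk_leftInverse hf a).symm
  · rintro ⟨p, q⟩ rfl
    simp [g, hmod]

end AdjoinRoot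

namespace TwoSegments

noncomputable def sigmaPoly : Polynomial (MvPolynomial (Fin 2) ℤ) :=
  Polynomial.X * (Polynomial.X - Polynomial.C (X 0 * X 1))

theorem sigmaPoly_monic : sigmaPoly.Monic :=
  Polynomial.monic_X_mul_X_sub_C _

theorem sigmaPoly_natDegree : sigmaPoly.natDegree = 2 :=
  Polynomial.natDegree_X_mul_X_sub_C _

theorem X_two_mul_sub_mem_twoSegmentsIdeal :
    (X 2 * (X 2 - X 0 * X 1) : MvPolynomial (Fin 4) ℤ) ∈ twoSegmentsIdeal := by
  rw [show (X 2 * (X 2 - X 0 * X 1) : MvPolynomial (Fin 4) ℤ)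
      = -X 2 * (X 0 * X 1 - X 2 - X 3) - X 2 * X 3 by ring]
  exact sub_mem (Ideal.mul_mem_left _ _ (Ideal.subset_span (Set.mem_insert _ _)))
    (Ideal.subset_span (Set.mem_insert_of_mem _ rfl))

theorem mk_X_three : Ideal.Quotient.mk twoSegmentsIdeal (X 3) =
    Ideal.Quotient.mk twoSegmentsIdeal (X 0 * X 1 - X 2) := by
  rw [Ideal.Quotient.mk_eq_mk_iff_sub_mem,
    show (X 3 - (X 0 * X 1 - X 2) : MvPolynomial (Fin 4) ℤ) = -(X 0 * X 1 - X 2 - X 3) by ring]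
  exact neg_mem (Ideal.subset_span (Set.mem_insert _ _))

noncomputable def toAdjoinRoot : MvPolynomial (Fin 4) ℤ →ₐ[ℤ] AdjoinRoot sigmaPoly :=
  aeval ![AdjoinRoot.of sigmaPoly (X 0), AdjoinRoot.of sigmaPoly (X 1), AdjoinRoot.root sigmaPoly,
    AdjoinRoot.of sigmaPoly (X 0 * X 1) - AdjoinRoot.root sigmaPoly]

theorem toAdjoinRoot_inclTwo (p : MvPolynomial (Fin 2) ℤ) :
    toAdjoinRoot (inclTwo p) = AdjoinRoot.of sigmaPoly p := by
  suffices h : (toAdjoinRoot : MvPolynomial (Fin 4) ℤ →+* _).comp inclTwo =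
      AdjoinRoot.of sigmaPoly from DFunLike.congr_fun h p
  refine MvPolynomial.ringHom_ext (fun n => by simp) fun i => ?_
  fin_cases i <;> simp [toAdjoinRoot, inclTwo]

theorem twoSegmentsIdeal_le_ker : twoSegmentsIdeal ≤ RingHom.ker toAdjoinRoot := by
  rw [twoSegmentsIdeal, Ideal.span_le]
  rintro x (rfl | rfl)
  · simp [toAdjoinRoot]
  · simpa [toAdjoinRoot] using AdjoinRoot.root_mul_sub_root (f := sigmaPoly) rfl

theorem eval₂_mk_X_two_sigmaPoly :
    sigmaPoly.eval₂ ((Ideal.Quotient.mk twoSegmentsIdeal).comp inclTwo)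
      (Ideal.Quotient.mk twoSegmentsIdeal (X 2)) = 0 := by
  simp only [sigmaPoly, Polynomial.eval₂_mul, Polynomial.eval₂_sub, Polynomial.eval₂_X,
    Polynomial.eval₂_C, RingHom.comp_apply]
  rw [← map_sub, ← map_mul, Ideal.Quotient.eq_zero_iff_mem]
  simpa [inclTwo] using X_two_mul_sub_mem_twoSegmentsIdeal

noncomputable def fromAdjoinRoot :
    AdjoinRoot sigmaPoly →+* MvPolynomial (Fin 4) ℤ ⧸ twoSegmentsIdeal :=
  AdjoinRoot.lift _ _ eval₂_mk_X_two_sigmaPoly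

noncomputable def equivAdjoinRoot :
    MvPolynomial (Fin 4) ℤ ⧸ twoSegmentsIdeal ≃+* AdjoinRoot sigmaPoly :=
  RingEquiv.ofRingHom
    (Ideal.Quotient.lift twoSegmentsIdeal toAdjoinRoot.toRingHom
      fun _ ha => twoSegmentsIdeal_le_ker ha)
    fromAdjoinRoot
    (by
      refine AdjoinRoot.ringHom_ext (RingHom.ext fun p => ?_) ?_
      · simp [fromAdjoinRoot, toAdjoinRoot_inclTwo]
      · simp [fromAdjoinRoot, toAdjoinRoot])
    (by
      refine Ideal.Quotient.ringHom_ext (MvPolynomial.ringHom_ext (fun n => by simp) fun i => ?_)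
      fin_cases i <;> simp [fromAdjoinRoot, toAdjoinRoot, inclTwo, mk_X_three])

theorem equivAdjoinRoot_mk_inclTwo (p : MvPolynomial (Fin 2) ℤ) :
    equivAdjoinRoot (Ideal.Quotient.mk twoSegmentsIdeal (inclTwo p)) = AdjoinRoot.of sigmaPoly p :=
  toAdjoinRoot_inclTwo p

theorem equivAdjoinRoot_mk_X_two :
    equivAdjoinRoot (Ideal.Quotient.mk twoSegmentsIdeal (X 2)) = AdjoinRoot.root sigmaPoly := by
  simp [equivAdjoinRoot, toAdjoinRoot]

end TwoSegments

/-- `ℤ[S]` is a free module over `ℤ[v₁,v₂]` with basis `{1, v_σ}`: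
every element is uniquely of the form `p(v₁,v₂)·1 + q(v₁,v₂)·v_σ`. -/
theorem twoSegments_faceRing_free :
    ∀ r : MvPolynomial (Fin 4) ℤ ⧸ twoSegmentsIdeal,
      ∃! pq : MvPolynomial (Fin 2) ℤ × MvPolynomial (Fin 2) ℤ,
        r = Ideal.Quotient.mk twoSegmentsIdeal (inclTwo pq.1) +
            Ideal.Quotient.mk twoSegmentsIdeal (inclTwo pq.2) *
              Ideal.Quotient.mk twoSegmentsIdeal (X 2) := by
  intro r
  open TwoSegments in
  simpa only [← equivAdjoinRoot.injective.eq_iff, map_add, map_mul, equivAdjoinRoot_mk_inclTwo,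
    equivAdjoinRoot_mk_X_two] using
    AdjoinRoot.existsUnique_eq_of_add_of_mul_root sigmaPoly_monic sigmaPoly_natDegree
      (equivAdjoinRoot r)
end

section
/- Let S be a simplicial poset on m vertices and a ∈ {0,1}^m, and let S_a be the subposet of elements σ with V(σ) ⊆ a. The map sending the dual of a simplex σ ∈ S_a \ {0̂} to the basis element u_{a∖V(σ)} v_σ defines an isomorphism of cochain complexes from the (reduced, shifted) simplicial cochain complex of S_a to the multidegree-2a component of the Koszul-type complex R*(S), where R*(S) is the free abelian group on monomials u_ω v_σ (ω ⊆ [m], ω ∩ V(σ) = ∅) with differential d(u_ω v_σ) = Σ_{i∈ω} ± u_{ω∖i} Σ_{η ∈ i∨σ} v_η. -/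
open MvPolynomial

/-- The Koszul-type complex `R^*(S)`: the free abelian group on monomials
`u_ω v_σ` (encoded as pairs `(ω, σ)`), with differential
`d(u_ω v_σ) = ∑_{i ∈ ω} ± u_{ω∖i} ∑_{η ∈ i∨σ} v_η`, the sign being
`(-1)^{#{j ∈ ω : j < i}}` with respect to an ordering `ord` of the vertices. -/
noncomputable def koszulD {α : Type} [Fintype α] [PartialOrder α] (ord : α → ℕ) :
    ((Set α × α) →₀ ℤ) →ₗ[ℤ] ((Set α × α) →₀ ℤ) :=
  Finsupp.lsum ℤ fun p => LinearMap.toSpanSingleton ℤ _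
    (∑ i ∈ (Set.toFinite p.1).toFinset,
      ((-1 : ℤ) ^ (p.1 ∩ {j : α | ord j < ord i}).ncard) •
        ∑ η ∈ (Set.toFinite (joins i p.2)).toFinset,
          Finsupp.single (p.1 \ {i}, η) (1 : ℤ))

/-- The reduced simplicial cochain differential of the full subposet `S_a`
(simplices `σ` with `V(σ) ⊆ a`, including the empty simplex `⊥`), with the
incidence signs induced by the vertex ordering `ord`:
`δ(σ*) = ∑ ± η*` over the `η ∈ S_a` covering `σ`. -/
noncomputable def subposetCochainD {α : Type} [Fintype α] [PartialOrder α] [OrderBot α]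
    (a : Set α) (ord : α → ℕ) : (α →₀ ℤ) →ₗ[ℤ] (α →₀ ℤ) :=
  Finsupp.lsum ℤ fun σ => LinearMap.toSpanSingleton ℤ _
    (∑ η ∈ (Set.toFinite {η : α | σ ⋖ η ∧ vertexSet η ⊆ a}).toFinset,
      ((-1 : ℤ) ^ (((a \ vertexSet σ) ∩
          {j : α | ∃ i ∈ vertexSet η \ vertexSet σ, ord j < ord i}).ncard)) •
        Finsupp.single η (1 : ℤ))

/-- The map sending the dual of a simplex `σ ∈ S_a` to `u_{a∖V(σ)} v_σ`. -/
noncomputable def hochsterMap {α : Type} [Fintype α] [PartialOrder α] [OrderBot α]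
    (a : Set α) : (α →₀ ℤ) →ₗ[ℤ] ((Set α × α) →₀ ℤ) :=
  Finsupp.lmapDomain ℤ ℤ fun σ : α => (a \ vertexSet σ, σ)

/-!
Every lower interval `[⊥, η]` of a simplicial poset is Boolean, so inside it a minimal common
upper bound of `σ` and a vertex `i ∉ V(σ)` can only be `V(σ) ∪ {i}` itself: the elements of
`i ∨ σ` are exactly the cofaces `η ⋗ σ` with `V(η) = V(σ) ∪ {i}`. Hence the terms
`u_{(a∖V(σ))∖i} v_η` of the Koszul differential of `u_{a∖V(σ)} v_σ` are, bijectively, the images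
`u_{a∖V(η)} v_η` of the cofaces of `σ` in `S_a`, and the two signs count the same vertices.
-/

namespace OrderEmbedding

variable {α ι : Type} [PartialOrder α] [OrderBot α] {φ : Finset ι ↪o α} {η : α}

theorem apply_le_of_range_eq_Icc (hφ : Set.range φ = Set.Icc ⊥ η) (s : Finset ι) : φ s ≤ η :=
  (hφ ▸ Set.mem_range_self s : φ s ∈ Set.Icc ⊥ η).2

theorem apply_empty_of_range_eq_Icc (hφ : Set.range φ = Set.Icc ⊥ η) : φ ∅ = ⊥ := by
  obtain ⟨s, hs⟩ : ⊥ ∈ Set.range φ := hφ ▸ ⟨le_rfl, bot_le⟩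
  exact le_bot_iff.mp (hs ▸ φ.monotone (Finset.empty_subset s))

theorem apply_univ_of_range_eq_Icc [Fintype ι] (hφ : Set.range φ = Set.Icc ⊥ η) :
    φ Finset.univ = η := by
  obtain ⟨s, hs⟩ : η ∈ Set.range φ := hφ ▸ ⟨bot_le, le_rfl⟩
  exact le_antisymm (apply_le_of_range_eq_Icc hφ _) (hs ▸ φ.monotone (Finset.subset_univ s))

theorem isAtom_apply_iff_of_range_eq_Icc (hφ : Set.range φ = Set.Icc ⊥ η) {s : Finset ι} :
    IsAtom (φ s) ↔ ∃ t, s = {t} := by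
  have hconn : (Set.range φ).OrdConnected := hφ ▸ Set.ordConnected_Icc
  rw [← bot_covBy_iff, ← apply_empty_of_range_eq_Icc hφ, hconn.apply_covBy_apply_iff,
    ← Finset.bot_eq_empty, bot_covBy_iff, Finset.isAtom_iff]

theorem vertexSet_apply_of_range_eq_Icc (hφ : Set.range φ = Set.Icc ⊥ η) (s : Finset ι) :
    vertexSet (φ s) = (fun t => φ {t}) '' ↑s := by
  ext x
  constructor
  · rintro ⟨hx, hxs⟩
    obtain ⟨u, rfl⟩ : x ∈ Set.range φ :=
      hφ ▸ ⟨bot_le, hxs.trans (apply_le_of_range_eq_Icc hφ s)⟩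
    obtain ⟨t, rfl⟩ := (isAtom_apply_iff_of_range_eq_Icc hφ).mp hx
    exact ⟨t, Finset.singleton_subset_iff.mp (φ.le_iff_le.mp hxs), rfl⟩
  · rintro ⟨t, ht, rfl⟩
    exact ⟨(isAtom_apply_iff_of_range_eq_Icc hφ).mpr ⟨t, rfl⟩,
      φ.le_iff_le.mpr (Finset.singleton_subset_iff.mpr ht)⟩

end OrderEmbedding

theorem mem_joins_of_covBy {α : Type} [PartialOrder α] {i σ η : α} (h : σ ⋖ η) (hi : i ≤ η)
    (hiσ : ¬ i ≤ σ) : η ∈ joins i σ := by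
  refine ⟨⟨hi, h.le⟩, fun ζ hζ hζη => ?_⟩
  rcases h.eq_or_eq hζ.2 hζη with rfl | rfl
  · exact absurd hζ.1 hiσ
  · exact le_rfl

namespace IsSimplicialPoset

open OrderEmbedding

variable {α : Type} [Fintype α] [PartialOrder α] [OrderBot α] {i σ η : α}

theorem exists_orderEmbedding_range_eq_Icc (hS : IsSimplicialPoset α) (η : α) :
    ∃ k, ∃ φ : Finset (Fin k) ↪o α, Set.range φ = Set.Icc ⊥ η := by
  obtain ⟨k, ⟨e⟩⟩ := hS η
  refine ⟨k, e.symm.toOrderEmbedding.trans (OrderEmbedding.subtype _), ?_⟩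
  ext x
  simp [Set.range_comp]

theorem covBy_of_mem_joins (hS : IsSimplicialPoset α) (hi : IsAtom i) (hiσ : ¬ i ≤ σ)
    (hη : η ∈ joins i σ) : σ ⋖ η := by
  obtain ⟨k, φ, hφ⟩ := hS.exists_orderEmbedding_range_eq_Icc η
  have hconn : (Set.range φ).OrdConnected := hφ ▸ Set.ordConnected_Icc
  obtain ⟨A, rfl⟩ : σ ∈ Set.range φ := hφ ▸ ⟨bot_le, hη.1.2⟩
  obtain ⟨I, rfl⟩ : i ∈ Set.range φ := hφ ▸ ⟨bot_le, hη.1.1⟩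
  obtain ⟨t, rfl⟩ := (isAtom_apply_iff_of_range_eq_Icc hφ).mp hi
  have ht : t ∉ A := fun h => hiσ (φ.le_iff_le.mpr (Finset.singleton_subset_iff.mpr h))
  -- `φ (insert t A)` is an upper bound of `i` and `σ` below `η`, so minimality forces equality
  have hle : φ (insert t A) ≤ η := apply_le_of_range_eq_Icc hφ _
  have hη_eq : φ (insert t A) = η := le_antisymm hle <| hη.2
    ⟨φ.le_iff_le.mpr (by simp), φ.le_iff_le.mpr (Finset.subset_insert t A)⟩ hle
  exact hη_eq ▸ hconn.apply_covBy_apply_iff.mpr (Finset.covBy_insert ht)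

theorem exists_vertexSet_eq_insert_of_covBy (hS : IsSimplicialPoset α) (h : σ ⋖ η) :
    ∃ i ∉ vertexSet σ, vertexSet η = insert i (vertexSet σ) := by
  obtain ⟨k, φ, hφ⟩ := hS.exists_orderEmbedding_range_eq_Icc η
  have hconn : (Set.range φ).OrdConnected := hφ ▸ Set.ordConnected_Icc
  obtain ⟨A, rfl⟩ : σ ∈ Set.range φ := hφ ▸ ⟨bot_le, h.le⟩
  rw [← apply_univ_of_range_eq_Icc hφ] at h ⊢
  obtain ⟨t, ht, hA⟩ := Finset.covBy_iff_exists_insert.mp (hconn.apply_covBy_apply_iff.mp h)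
  refine ⟨φ {t}, ?_, ?_⟩
  · rw [vertexSet_apply_of_range_eq_Icc hφ]
    rintro ⟨u, hu, hut⟩
    exact ht (Finset.singleton_inj.mp (φ.injective hut) ▸ hu)
  · rw [← hA, vertexSet_apply_of_range_eq_Icc hφ, vertexSet_apply_of_range_eq_Icc hφ,
      Finset.coe_insert, Set.image_insert_eq]

theorem vertexSet_eq_insert_of_covBy (hS : IsSimplicialPoset α) (h : σ ⋖ η)
    (hi : i ∈ vertexSet η) (hiσ : i ∉ vertexSet σ) : vertexSet η = insert i (vertexSet σ) := by
  obtain ⟨j, -, hV⟩ := hS.exists_vertexSet_eq_insert_of_covBy h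
  rw [hV] at hi ⊢
  rw [(Set.mem_insert_iff.mp hi).resolve_right hiσ]

theorem mem_joins_iff (hS : IsSimplicialPoset α) (hi : IsAtom i) (hiσ : i ∉ vertexSet σ) :
    η ∈ joins i σ ↔ σ ⋖ η ∧ i ∈ vertexSet η :=
  have hiσ' : ¬ i ≤ σ := fun h => hiσ ⟨hi, h⟩
  ⟨fun h => ⟨hS.covBy_of_mem_joins hi hiσ' h, hi, h.1.1⟩,
    fun h => mem_joins_of_covBy h.1 h.2.2 hiσ'⟩

end IsSimplicialPoset

section Hochster

open Finsupp

variable {α : Type} [Fintype α] [PartialOrder α]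

theorem koszulD_single (ord : α → ℕ) (ω : Set α) (σ : α) :
    koszulD ord (single (ω, σ) 1) =
      ∑ i ∈ (Set.toFinite ω).toFinset, ((-1 : ℤ) ^ (ω ∩ {j | ord j < ord i}).ncard) •
        ∑ η ∈ (Set.toFinite (joins i σ)).toFinset, single (ω \ {i}, η) 1 := by
  rw [koszulD, lsum_single, LinearMap.toSpanSingleton_apply_one]

variable [OrderBot α]

theorem hochsterMap_single (a : Set α) (σ : α) :
    hochsterMap a (single σ 1) = single (a \ vertexSet σ, σ) 1 := by
  rw [hochsterMap, lmapDomain_apply, mapDomain_single]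

theorem hochsterMap_injective (a : Set α) : Function.Injective (hochsterMap a) :=
  mapDomain_injective fun _ _ h => congrArg Prod.snd h

theorem subposetCochainD_single (a : Set α) (ord : α → ℕ) (σ : α) :
    subposetCochainD a ord (single σ 1) =
      ∑ η ∈ (Set.toFinite {η : α | σ ⋖ η ∧ vertexSet η ⊆ a}).toFinset,
        ((-1 : ℤ) ^ (((a \ vertexSet σ) ∩
          {j | ∃ i ∈ vertexSet η \ vertexSet σ, ord j < ord i}).ncard)) • single η 1 := by
  rw [subposetCochainD, lsum_single, LinearMap.toSpanSingleton_apply_one]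

theorem map_hochsterMap_span (a : Set α) (ha : ∀ i ∈ a, IsAtom i) :
    Submodule.map (hochsterMap a)
        (Submodule.span ℤ {x : α →₀ ℤ | ∃ σ : α, vertexSet σ ⊆ a ∧ x = single σ 1}) =
      Submodule.span ℤ {y : (Set α × α) →₀ ℤ | ∃ (ω : Set α) (σ : α),
        (∀ i ∈ ω, IsAtom i) ∧ ω ∩ vertexSet σ = ∅ ∧ ω ∪ vertexSet σ = a ∧
        y = single (ω, σ) 1} := by
  rw [Submodule.map_span]
  congr 1
  ext y
  constructor
  · rintro ⟨_, ⟨σ, hσ, rfl⟩, rfl⟩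
    refine ⟨a \ vertexSet σ, σ, fun i hi => ha i hi.1, Set.sdiff_inter_self,
      Set.sdiff_union_of_subset hσ, hochsterMap_single a σ⟩
  · rintro ⟨ω, σ, -, hdisj, hunion, rfl⟩
    have hω : a \ vertexSet σ = ω :=
      (Set.disjoint_iff_inter_eq_empty.mpr hdisj).symm.sdiff_eq_of_sup_eq
        ((Set.union_comm _ _).trans hunion)
    exact ⟨single σ 1, ⟨σ, hunion ▸ Set.subset_union_right, rfl⟩, hω ▸ hochsterMap_single a σ⟩

theorem hochsterMap_subposetCochainD_single (hS : IsSimplicialPoset α) {a : Set α}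
    (ha : ∀ i ∈ a, IsAtom i) (ord : α → ℕ) {σ : α} (hσ : vertexSet σ ⊆ a) :
    hochsterMap a (subposetCochainD a ord (single σ 1)) =
      koszulD ord (hochsterMap a (single σ 1)) := by
  rw [subposetCochainD_single, hochsterMap_single, koszulD_single, map_sum]
  simp only [map_zsmul, hochsterMap_single, Finset.smul_sum]
  rw [Finset.sum_sigma']
  have hterm : ∀ p ∈ (Set.toFinite (a \ vertexSet σ)).toFinset.sigma
      (fun i => (Set.toFinite (joins i σ)).toFinset),
      p.1 ∈ a ∧ p.1 ∉ vertexSet σ ∧ σ ⋖ p.2 ∧ vertexSet p.2 = insert p.1 (vertexSet σ) := by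
    rintro ⟨i, η⟩ hp
    simp only [Finset.mem_sigma, Set.Finite.mem_toFinset] at hp
    obtain ⟨⟨hia, hiσ⟩, hη⟩ := hp
    obtain ⟨hcov, hiη⟩ := (hS.mem_joins_iff (ha i hia) hiσ).mp hη
    exact ⟨hia, hiσ, hcov, hS.vertexSet_eq_insert_of_covBy hcov hiη hiσ⟩
  symm
  refine Finset.sum_bij (fun p _ => p.2) ?_ ?_ ?_ ?_
  · intro p hp
    obtain ⟨hia, -, hcov, hV⟩ := hterm p hp
    rw [Set.Finite.mem_toFinset]
    exact ⟨hcov, hV ▸ Set.insert_subset hia hσ⟩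
  · intro p hp q hq (hpq : p.2 = q.2)
    obtain ⟨-, hpσ, -, hVp⟩ := hterm p hp
    obtain ⟨-, -, -, hVq⟩ := hterm q hq
    have hp_mem : p.1 ∈ vertexSet q.2 := hpq ▸ hVp ▸ Set.mem_insert _ _
    rw [hVq] at hp_mem
    exact Sigma.ext ((Set.mem_insert_iff.mp hp_mem).resolve_right hpσ) (heq_of_eq hpq)
  · intro η hη
    obtain ⟨hcov, hηa⟩ := (Set.Finite.mem_toFinset _).mp hη
    obtain ⟨i, hiσ, hV⟩ := hS.exists_vertexSet_eq_insert_of_covBy hcov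
    have hiη : i ∈ vertexSet η := hV ▸ Set.mem_insert i _
    refine ⟨⟨i, η⟩, ?_, rfl⟩
    simp only [Finset.mem_sigma, Set.Finite.mem_toFinset]
    exact ⟨⟨hηa hiη, hiσ⟩, (hS.mem_joins_iff hiη.1 hiσ).mpr ⟨hcov, hiη⟩⟩
  · intro p hp
    obtain ⟨-, hiσ, -, hV⟩ := hterm p hp
    rw [hV, Set.insert_sdiff_eq_singleton hiσ, Set.insert_eq, ← Set.sdiff_sdiff,
      Set.sdiff_sdiff_comm]
    simp

end Hochster

theorem hochster_subcomplex_iso_general {α : Type} [Fintype α] [PartialOrder α] [OrderBot α]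
    (hS : IsSimplicialPoset α) (a : Set α) (ha : ∀ i ∈ a, IsAtom i)
    (ord : α → ℕ) :
    Function.Injective (hochsterMap (α := α) a) ∧
    Submodule.map (hochsterMap (α := α) a)
        (Submodule.span ℤ {x : α →₀ ℤ | ∃ σ : α, vertexSet σ ⊆ a ∧ x = Finsupp.single σ 1}) =
      Submodule.span ℤ {y : (Set α × α) →₀ ℤ | ∃ (ω : Set α) (σ : α),
        (∀ i ∈ ω, IsAtom i) ∧ ω ∩ vertexSet σ = ∅ ∧ ω ∪ vertexSet σ = a ∧
        y = Finsupp.single (ω, σ) 1} ∧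
    ∀ σ : α, vertexSet σ ⊆ a →
      hochsterMap a (subposetCochainD a ord (Finsupp.single σ 1)) =
        koszulD ord (hochsterMap a (Finsupp.single σ 1)) :=
  ⟨hochsterMap_injective a, map_hochsterMap_span a ha,
    fun _ hσ => hochsterMap_subposetCochainD_single hS ha ord hσ⟩

/-- for `a ∈ {0,1}^m` (a set of vertices), the map
`σ* ↦ u_{a∖V(σ)} v_σ` is an isomorphism of cochain complexes from the reduced
(shifted) simplicial cochain complex of the full subposet `S_a` onto the
multidegree-`2a` component of the Koszul-type complex `R^*(S)`:
it is injective, it carries the span of the dual simplices of `S_a` onto the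
span of the monomials `u_ω v_σ` of multidegree `2a` (those with
`ω ∩ V(σ) = ∅` and `ω ∪ V(σ) = a`), and it commutes with the differentials. -/
theorem hochster_subcomplex_iso {α : Type} [Fintype α] [PartialOrder α] [OrderBot α]
    (hS : IsSimplicialPoset α) (a : Set α) (ha : ∀ i ∈ a, IsAtom i)
    (ord : α → ℕ) (hord : Function.Injective ord) :
    Function.Injective (hochsterMap (α := α) a) ∧
    Submodule.map (hochsterMap (α := α) a)
        (Submodule.span ℤ {x : α →₀ ℤ | ∃ σ : α, vertexSet σ ⊆ a ∧ x = Finsupp.single σ 1}) =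
      Submodule.span ℤ {y : (Set α × α) →₀ ℤ | ∃ (ω : Set α) (σ : α),
        (∀ i ∈ ω, IsAtom i) ∧ ω ∩ vertexSet σ = ∅ ∧ ω ∪ vertexSet σ = a ∧
        y = Finsupp.single (ω, σ) 1} ∧
    ∀ σ : α, vertexSet σ ⊆ a →
      hochsterMap a (subposetCochainD a ord (Finsupp.single σ 1)) =
        koszulD ord (hochsterMap a (Finsupp.single σ 1)) :=
  hochster_subcomplex_iso_general hS a ha ord
end
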